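/- arXiv:1410.5966 — 9 statements merged into one kernel-verified Lean document; each statement's English description precedes it below -/
import Mathlib

section
/- If S is a collection of subsets of a nonempty set Ω containing ∅ and Ω, closed under pairwise intersections, and such that for all S, T ∈ S the set difference S \ T can be written as a union of at most k pairwise disjoint members of S (i.e., S is a k-semiring), and similarly S' is a k'-semiring on Ω, then the family {S ∩ S' : S ∈ S, S' ∈ S'} is a (k + k')-semiring on Ω. -/
open MeasureTheory Set

/-- A `k`-semiring of sets on `Ω`: contains `∅` and `univ`, is closed under
intersections, and the difference of any two members is a disjoint union of
at most `k` members. -/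
def IsSemiring {Ω : Type*} (k : ℕ) (𝒮 : Set (Set Ω)) : Prop :=
  ∅ ∈ 𝒮 ∧ Set.univ ∈ 𝒮 ∧ (∀ A ∈ 𝒮, ∀ B ∈ 𝒮, A ∩ B ∈ 𝒮) ∧
    ∀ A ∈ 𝒮, ∀ B ∈ 𝒮, ∃ ℓ, 1 ≤ ℓ ∧ ℓ ≤ k ∧ ∃ R : Fin ℓ → Set Ω,
      (∀ i, R i ∈ 𝒮) ∧ (∀ i j, i ≠ j → Disjoint (R i) (R j)) ∧ A \ B = ⋃ i, R i

theorem stmt0 {Ω : Type*} [Nonempty Ω] {k k' : ℕ} (hk : 1 ≤ k) (hk' : 1 ≤ k')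
    {𝒮 𝒮' : Set (Set Ω)} (h : IsSemiring k 𝒮) (h' : IsSemiring k' 𝒮') :
    IsSemiring (k + k') {A | ∃ S ∈ 𝒮, ∃ S' ∈ 𝒮', A = S ∩ S'} := by
  obtain ⟨he, hu, hi, hd⟩ := h
  obtain ⟨he', hu', hi', hd'⟩ := h'
  refine ⟨⟨∅, he, ∅, he', by simp⟩, ⟨univ, hu, univ, hu', by simp⟩, ?_, ?_⟩
  · rintro A ⟨S, hS, S', hS', rfl⟩ B ⟨T, hT, T', hT', rfl⟩
    exact ⟨S ∩ T, hi S hS T hT, S' ∩ T', hi' S' hS' T' hT', by ac_rfl⟩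
  · rintro A ⟨S, hS, S', hS', rfl⟩ B ⟨T, hT, T', hT', rfl⟩
    obtain ⟨ℓ, hℓ1, hℓk, R, hR, hRd, hRu⟩ := hd S hS T hT
    obtain ⟨ℓ', hℓ1', hℓk', R', hR', hRd', hRu'⟩ := hd' S' hS' T' hT'
    refine ⟨ℓ + ℓ', le_trans hℓ1 (Nat.le_add_right _ _), Nat.add_le_add hℓk hℓk', ?_⟩
    set F : Fin ℓ ⊕ Fin ℓ' → Set Ω :=
      Sum.elim (fun i => R i ∩ S') (fun j => (S ∩ T) ∩ R' j) with hF
    refine ⟨fun i => F (finSumFinEquiv.symm i), ?_, ?_, ?_⟩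
    · intro i
      rcases ha : finSumFinEquiv.symm i with a | b <;>
        simp only [ha, Sum.elim_inl, Sum.elim_inr, hF]
      · exact ⟨R a, hR a, S', hS', rfl⟩
      · exact ⟨S ∩ T, hi S hS T hT, R' b, hR' b, rfl⟩
    · intro i j hij
      have hne : finSumFinEquiv.symm i ≠ finSumFinEquiv.symm j := fun hc => hij (by
        simpa using congrArg finSumFinEquiv hc)
      have hRT : ∀ a, R a ⊆ S \ T := fun a => hRu ▸ subset_iUnion R a
      have hRT' : ∀ b, R' b ⊆ S' \ T' := fun b => hRu' ▸ subset_iUnion R' b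
      rcases ha : finSumFinEquiv.symm i with a | b <;>
        rcases hb : finSumFinEquiv.symm j with a' | b' <;>
        rw [ha, hb] at hne <;>
        simp only [ha, hb, hF, Sum.elim_inl, Sum.elim_inr]
      · exact ((hRd a a' (fun hc => hne (by rw [hc]))).mono inter_subset_left
          inter_subset_left)
      · refine Disjoint.mono (le_trans inter_subset_left (hRT a)) inter_subset_left ?_
        exact disjoint_sdiff_left.mono_right inter_subset_right
      · refine Disjoint.mono inter_subset_left (le_trans inter_subset_left (hRT a')) ?_
        exact (disjoint_sdiff_left.mono_right inter_subset_right).symm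
      · exact ((hRd' b b' (fun hc => hne (by rw [hc]))).mono inter_subset_right
          inter_subset_right)
    · rw [(Equiv.symm finSumFinEquiv).surjective.iUnion_comp F, iUnion_sum]
      simp only [hF, Sum.elim_inl, Sum.elim_inr, ← iUnion_inter, ← inter_iUnion,
        ← hRu, ← hRu']
      ext x
      simp only [mem_diff, mem_inter_iff, mem_union]
      tauto
end

section
/- Let Ω be a nonempty set, m a positive integer, and for each i ∈ [m] let S_i be a k_i-semiring on Ω. Then the family S = {⋂_{i=1}^m S_i : S_i ∈ S_i for every i ∈ [m]} is a k-semiring on Ω, where k = k₁ + ⋯ + k_m. -/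
open MeasureTheory Set

theorem stmt1 {Ω : Type*} [Nonempty Ω] {m : ℕ} (hm : 1 ≤ m) {k : Fin m → ℕ}
    (hk : ∀ i, 1 ≤ k i) {𝒮 : Fin m → Set (Set Ω)}
    (h : ∀ i, IsSemiring (k i) (𝒮 i)) :
    IsSemiring (∑ i, k i)
      {A | ∃ T : Fin m → Set Ω, (∀ i, T i ∈ 𝒮 i) ∧ A = ⋂ i, T i} := by
  classical
  haveI : Nonempty (Fin m) := Fin.pos_iff_nonempty.mp (by omega)
  refine ⟨⟨fun _ => ∅, fun i => (h i).1, (Set.iInter_const ∅).symm⟩,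
    ⟨fun _ => Set.univ, fun i => (h i).2.1, (Set.iInter_const Set.univ).symm⟩,
    ?_, ?_⟩
  · rintro A ⟨T, hT, rfl⟩ B ⟨U, hU, rfl⟩
    exact ⟨fun i => T i ∩ U i, fun i => (h i).2.2.1 _ (hT i) _ (hU i),
      (Set.iInter_inter_distrib T U).symm⟩
  · rintro A ⟨T, hT, rfl⟩ B ⟨U, hU, rfl⟩
    choose ℓ hℓ1 hℓk R hR hdisj hdiff using
      fun i => (h i).2.2.2 (T i) (hT i) (U i) (hU i)
    have hsub : ∀ i r, R i r ⊆ T i \ U i := by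
      intro i r
      rw [hdiff i]
      exact Set.subset_iUnion _ r
    set P : (Σ i : Fin m, Fin (ℓ i)) → Set Ω :=
      fun p => ⋂ j, if j < p.1 then T j ∩ U j else if j = p.1 then R p.1 p.2 else T j
      with hP
    have hPsub : ∀ p : (Σ i : Fin m, Fin (ℓ i)), P p ⊆ R p.1 p.2 := by
      intro p x hx
      have := Set.mem_iInter.mp hx p.1
      simpa using this
    have hPT : ∀ p : (Σ i : Fin m, Fin (ℓ i)), ∀ j, P p ⊆ T j := by
      intro p j x hx
      have hj := Set.mem_iInter.mp hx j
      by_cases h1 : j < p.1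
      · simp only [h1, if_pos] at hj; exact hj.1
      · by_cases h2 : j = p.1
        · subst h2
          simp only [lt_irrefl, if_neg, if_pos, reduceIte] at hj
          exact (hsub p.1 p.2 hj).1
        · simpa [h1, h2] using hj
    have hPU : ∀ p : (Σ i : Fin m, Fin (ℓ i)), ∀ j < p.1, P p ⊆ U j := by
      intro p j hj x hx
      have := Set.mem_iInter.mp hx j
      simp only [hj, if_pos] at this
      exact this.2
    have hPdisj : ∀ p q : (Σ i : Fin m, Fin (ℓ i)), p ≠ q → Disjoint (P p) (P q) := by
      intro p q hpq
      rcases lt_trichotomy p.1 q.1 with hlt | heq | hgt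
      · refine Set.disjoint_left.mpr fun x hxp hxq => ?_
        have h1 : x ∈ R p.1 p.2 := hPsub p hxp
        have h2 : x ∈ U p.1 := hPU q p.1 hlt hxq
        exact (hsub p.1 p.2 h1).2 h2
      · obtain ⟨i, r⟩ := p
        obtain ⟨i', r'⟩ := q
        simp only at heq
        subst heq
        have hrr : r ≠ r' := fun hh => hpq (by simp [hh])
        exact Set.disjoint_of_subset (hPsub ⟨i, r⟩) (hPsub ⟨i, r'⟩) (hdisj i r r' hrr)
      · refine Set.disjoint_left.mpr fun x hxp hxq => ?_
        have h1 : x ∈ R q.1 q.2 := hPsub q hxq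
        have h2 : x ∈ U q.1 := hPU p q.1 hgt hxp
        exact (hsub q.1 q.2 h1).2 h2
    have hPmem : ∀ p : (Σ i : Fin m, Fin (ℓ i)),
        P p ∈ {A | ∃ T : Fin m → Set Ω, (∀ i, T i ∈ 𝒮 i) ∧ A = ⋂ i, T i} := by
      intro p
      refine ⟨fun j => if j < p.1 then T j ∩ U j else if j = p.1 then R p.1 p.2 else T j,
        fun j => ?_, rfl⟩
      by_cases h1 : j < p.1
      · simp only [h1, if_pos]
        exact (h j).2.2.1 _ (hT j) _ (hU j)
      · by_cases h2 : j = p.1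
        · subst h2; simpa [h1] using hR p.1 p.2
        · simpa [h1, h2] using hT j
    have hunion : (⋂ j, T j) \ (⋂ j, U j) = ⋃ p, P p := by
      ext x
      simp only [Set.mem_diff, Set.mem_iInter, Set.mem_iUnion]
      constructor
      · rintro ⟨hxT, hxU⟩
        push_neg at hxU
        obtain ⟨j0, hj0⟩ := hxU
        obtain ⟨i, hi, hmin⟩ := wellFounded_lt.has_min {j : Fin m | x ∉ U j} ⟨j0, hj0⟩
        have hmin' : ∀ j, j < i → x ∈ U j := fun j hj => by
          by_contra hc; exact hmin j hc hj
        have hxTU : x ∈ T i \ U i := ⟨hxT i, hi⟩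
        rw [hdiff i] at hxTU
        obtain ⟨r, hr⟩ := Set.mem_iUnion.mp hxTU
        refine ⟨⟨i, r⟩, Set.mem_iInter.mpr fun j => ?_⟩
        by_cases h1 : j < i
        · simp only [h1, if_pos]; exact ⟨hxT j, hmin' j h1⟩
        · by_cases h2 : j = i
          · subst h2; simpa [h1] using hr
          · simpa [h1, h2] using hxT j
      · rintro ⟨p, hp⟩
        refine ⟨fun j => hPT p j hp, fun hc => ?_⟩
        exact (hsub p.1 p.2 (hPsub p hp)).2 (hc p.1)
    have hcard : Fintype.card (Σ i : Fin m, Fin (ℓ i)) = ∑ i, ℓ i := by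
      simp [Fintype.card_sigma]
    let e : (Σ i : Fin m, Fin (ℓ i)) ≃ Fin (∑ i, ℓ i) := Fintype.equivFinOfCardEq hcard
    refine ⟨∑ i, ℓ i, ?_, ?_, fun n => P (e.symm n), fun n => hPmem _, ?_, ?_⟩
    · calc 1 ≤ m := hm
        _ = ∑ _i : Fin m, 1 := by simp
        _ ≤ ∑ i, ℓ i := Finset.sum_le_sum fun i _ => hℓ1 i
    · exact Finset.sum_le_sum fun i _ => hℓk i
    · intro i j hij
      exact hPdisj _ _ fun hh => hij (by simpa using congrArg e hh)
    · rw [hunion, ← e.symm.surjective.iUnion_comp P]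
end

section
/- Let Ω be a nonempty set, k a positive integer, and for each i ∈ [k] let A_i be an algebra of subsets of Ω. Then the family {A₁ ∩ ⋯ ∩ A_k : A_i ∈ A_i for every i ∈ [k]} is a k-semiring on Ω. -/
open MeasureTheory Set

theorem stmt4 {Ω : Type*} [Nonempty Ω] {k : ℕ} (hk : 1 ≤ k)
    {𝒜 : Fin k → Set (Set Ω)}
    (h : ∀ i, ∅ ∈ 𝒜 i ∧ Set.univ ∈ 𝒜 i ∧ (∀ A ∈ 𝒜 i, Aᶜ ∈ 𝒜 i) ∧
      ∀ A ∈ 𝒜 i, ∀ B ∈ 𝒜 i, A ∩ B ∈ 𝒜 i) :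
    IsSemiring k {A | ∃ T : Fin k → Set Ω, (∀ i, T i ∈ 𝒜 i) ∧ A = ⋂ i, T i} := by
  classical
  haveI : Nonempty (Fin k) := ⟨⟨0, hk⟩⟩
  refine ⟨⟨fun _ => ∅, fun i => (h i).1, (Set.iInter_const _).symm⟩,
    ⟨fun _ => Set.univ, fun i => (h i).2.1, (Set.iInter_const _).symm⟩, ?_, ?_⟩
  · rintro A ⟨S, hS, rfl⟩ B ⟨T, hT, rfl⟩
    refine ⟨fun i => S i ∩ T i, fun i => (h i).2.2.2 _ (hS i) _ (hT i), ?_⟩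
    ext x; simp [forall_and]
  · rintro A ⟨S, hS, rfl⟩ B ⟨T, hT, rfl⟩
    -- W i j : the extra constraint on coordinate i in piece j
    set W : Fin k → Fin k → Set Ω := fun i j =>
      if i < j then T i else if i = j then (T i)ᶜ else Set.univ with hW
    have hWmem : ∀ i j, W i j ∈ 𝒜 i := by
      intro i j
      by_cases h1 : i < j
      · simpa [hW, h1] using hT i
      · by_cases h2 : i = j
        · simpa [hW, h1, h2] using (h i).2.2.1 _ (hT i)
        · simpa [hW, h1, h2] using (h i).2.1
    set R : Fin k → Set Ω := fun j => ⋂ i, S i ∩ W i j with hR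
    have hRmem : ∀ j x, x ∈ R j ↔ (∀ i, x ∈ S i) ∧ (∀ i, i < j → x ∈ T i) ∧ x ∉ T j := by
      intro j x
      simp only [hR, Set.mem_iInter, Set.mem_inter_iff, forall_and]
      constructor
      · rintro ⟨h1, h2⟩
        refine ⟨h1, fun i hij => ?_, ?_⟩
        · have := h2 i; simpa [hW, hij] using this
        · have := h2 j; simpa [hW] using this
      · rintro ⟨h1, h2, h3⟩
        refine ⟨h1, fun i => ?_⟩
        by_cases h4 : i < j
        · simpa [hW, h4] using h2 i h4
        · by_cases h5 : i = j
          · subst h5; simpa [hW, h4] using h3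
          · simp [hW, h4, h5]
    refine ⟨k, hk, le_rfl, R, fun j => ⟨fun i => S i ∩ W i j,
      fun i => (h i).2.2.2 _ (hS i) _ (hWmem i j), rfl⟩, ?_, ?_⟩
    · intro i j hij
      rw [Set.disjoint_left]
      intro x hxi hxj
      rw [hRmem] at hxi hxj
      rcases lt_or_gt_of_ne hij with hlt | hlt
      · exact hxi.2.2 (hxj.2.1 i hlt)
      · exact hxj.2.2 (hxi.2.1 j hlt)
    · ext x
      simp only [Set.mem_diff, Set.mem_iInter, Set.mem_iUnion]
      constructor
      · rintro ⟨hxS, hxB⟩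
        push_neg at hxB
        obtain ⟨i0, hi0⟩ := hxB
        obtain ⟨j, hj, hjmin⟩ := Finset.exists_min_image
          (Finset.univ.filter fun i => x ∉ T i) id ⟨i0, by simp [hi0]⟩
        simp only [Finset.mem_filter, Finset.mem_univ, true_and] at hj hjmin
        refine ⟨j, (hRmem j x).2 ⟨hxS, fun i hij => ?_, hj⟩⟩
        by_contra hxi
        exact absurd (hjmin i hxi) (not_le.2 hij)
      · rintro ⟨j, hxj⟩
        rw [hRmem] at hxj
        exact ⟨hxj.1, fun hxB => hxj.2.2 (by simpa using hxB j)⟩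
end

section
/- Let d be a positive integer, Ω₁, …, Ω_d nonempty sets, and for each i ∈ [d] let S_i be a k_i-semiring on Ω_i. Then the family {S₁ × ⋯ × S_d : S_i ∈ S_i for each i} is a k-semiring on Ω₁ × ⋯ × Ω_d, where k = k₁ + ⋯ + k_d. -/
open MeasureTheory Set

theorem stmt5 {d : ℕ} (hd : 1 ≤ d) {Ω : Fin d → Type*} [∀ i, Nonempty (Ω i)]
    {k : Fin d → ℕ} (hk : ∀ i, 1 ≤ k i) {𝒮 : ∀ i, Set (Set (Ω i))}
    (h : ∀ i, IsSemiring (k i) (𝒮 i)) :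
    IsSemiring (∑ i, k i)
      {A : Set (∀ i, Ω i) |
        ∃ T : ∀ i, Set (Ω i), (∀ i, T i ∈ 𝒮 i) ∧ A = {x | ∀ i, x i ∈ T i}} := by
  classical
  have i0 : Fin d := ⟨0, hd⟩
  refine ⟨?_, ?_, ?_, ?_⟩
  · refine ⟨fun _ => ∅, fun i => (h i).1, ?_⟩
    ext x
    simp only [Set.mem_empty_iff_false, Set.mem_setOf_eq, false_iff]
    exact fun hx => hx i0
  · refine ⟨fun _ => univ, fun i => (h i).2.1, ?_⟩
    ext x; simp
  · rintro A ⟨T, hT, rfl⟩ B ⟨U, hU, rfl⟩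
    refine ⟨fun i => T i ∩ U i, fun i => (h i).2.2.1 _ (hT i) _ (hU i), ?_⟩
    ext x
    simp only [mem_inter_iff, mem_setOf_eq, ← forall_and]
  · rintro A ⟨T, hT, rfl⟩ B ⟨U, hU, rfl⟩
    choose ℓ hℓ1 hℓ2 R hRmem hRdisj hRunion using
      fun i => (h i).2.2.2 _ (hT i) _ (hU i)
    have hsub : ∀ i (m : Fin (ℓ i)), R i m ⊆ T i \ U i := fun i m => by
      rw [hRunion i]; exact subset_iUnion _ m
    -- the pieces
    set D : (Σ i, Fin (ℓ i)) → ∀ j, Set (Ω j) := fun p =>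
      Function.update (fun j => if j < p.1 then T j ∩ U j else T j) p.1 (R p.1 p.2) with hD
    set C : (Σ i, Fin (ℓ i)) → Set (∀ i, Ω i) := fun p => {x | ∀ j, x j ∈ D p j} with hC
    have hDi : ∀ p : Σ i, Fin (ℓ i), D p p.1 = R p.1 p.2 := fun p => by
      simp [hD]
    have hDlt : ∀ (p : Σ i, Fin (ℓ i)) j, j < p.1 → D p j = T j ∩ U j := fun p j hj => by
      rw [hD]
      simp only [Function.update_of_ne (ne_of_lt hj)]
      rw [if_pos hj]
    have hDgt : ∀ (p : Σ i, Fin (ℓ i)) j, p.1 < j → D p j = T j := fun p j hj => by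
      rw [hD]
      simp only [Function.update_of_ne (ne_of_gt hj)]
      rw [if_neg (not_lt_of_gt hj)]
    have hDT : ∀ (p : Σ i, Fin (ℓ i)) j, D p j ⊆ T j := fun p j => by
      rcases lt_trichotomy j p.1 with hj | hj | hj
      · rw [hDlt p j hj]; exact inter_subset_left
      · subst hj; rw [hDi p]; exact (hsub _ _).trans diff_subset
      · rw [hDgt p j hj]
    have hCdisj : ∀ p q : (Σ i, Fin (ℓ i)), p ≠ q → Disjoint (C p) (C q) := by
      have key : ∀ p q : (Σ i, Fin (ℓ i)), p.1 < q.1 → Disjoint (C p) (C q) := by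
        intro p q hpq
        rw [Set.disjoint_left]
        intro x hx hx'
        have h1 : x p.1 ∈ R p.1 p.2 := by have := hx p.1; rwa [hDi] at this
        have h2 : x p.1 ∈ T p.1 ∩ U p.1 := by
          have := hx' p.1; rwa [hDlt q p.1 hpq] at this
        exact (hsub _ _ h1).2 h2.2
      intro p q hpq
      rcases lt_trichotomy p.1 q.1 with hlt | heq | hgt
      · exact key p q hlt
      · obtain ⟨i, m⟩ := p
        obtain ⟨i', m'⟩ := q
        cases heq
        have hmm : m ≠ m' := by
          intro hc; exact hpq (by rw [hc])
        rw [Set.disjoint_left]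
        intro x hx hx'
        have h1 : x i ∈ R i m := by
          have := hx i; rwa [hDi ⟨i, m⟩] at this
        have h2 : x i ∈ R i m' := by
          have := hx' i; rwa [hDi ⟨i, m'⟩] at this
        exact Set.disjoint_left.1 (hRdisj i m m' hmm) h1 h2
      · exact (key q p hgt).symm
    have hCunion :
        {x : ∀ i, Ω i | ∀ i, x i ∈ T i} \ {x | ∀ i, x i ∈ U i} = ⋃ p, C p := by
      ext x
      constructor
      · rintro ⟨hxT, hxU⟩
        simp only [mem_setOf_eq] at hxT hxU
        push_neg at hxU
        have hne : (Finset.univ.filter (fun i => x i ∉ U i)).Nonempty := by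
          obtain ⟨i, hi⟩ := hxU
          exact ⟨i, Finset.mem_filter.2 ⟨Finset.mem_univ i, hi⟩⟩
        set i := (Finset.univ.filter (fun i => x i ∉ U i)).min' hne with hi
        have himem : x i ∉ U i :=
          (Finset.mem_filter.1 ((Finset.univ.filter (fun i => x i ∉ U i)).min'_mem hne)).2
        have hmin : ∀ j, j < i → x j ∈ U j := by
          intro j hj
          by_contra hc
          exact absurd (Finset.min'_le _ j (Finset.mem_filter.2 ⟨Finset.mem_univ j, hc⟩))
            (not_le_of_gt hj)
        have hxi : x i ∈ ⋃ m, R i m := by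
          rw [← hRunion i]; exact ⟨hxT i, himem⟩
        obtain ⟨m, hm⟩ := Set.mem_iUnion.1 hxi
        refine Set.mem_iUnion.2 ⟨⟨i, m⟩, ?_⟩
        intro j
        rcases lt_trichotomy j i with hj | hj | hj
        · rw [hDlt ⟨i, m⟩ j hj]; exact ⟨hxT j, hmin j hj⟩
        · rw [hj, hDi ⟨i, m⟩]; exact hm
        · rw [hDgt ⟨i, m⟩ j hj]; exact hxT j
      · intro hx
        obtain ⟨p, hp⟩ := Set.mem_iUnion.1 hx
        refine ⟨fun j => hDT p j (hp j), ?_⟩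
        intro hxU
        have h1 : x p.1 ∈ R p.1 p.2 := by have := hp p.1; rwa [hDi] at this
        exact (hsub _ _ h1).2 (hxU p.1)
    have hcard : Fintype.card (Σ i, Fin (ℓ i)) = ∑ i, ℓ i := by
      simp [Fintype.card_sigma]
    let e : Fin (∑ i, ℓ i) ≃ Σ i, Fin (ℓ i) := (Fintype.equivFinOfCardEq hcard).symm
    refine ⟨∑ i, ℓ i, ?_, ?_, fun n => C (e n), ?_, ?_, ?_⟩
    · exact le_trans (hℓ1 i0)
        (Finset.single_le_sum (f := ℓ) (fun _ _ => Nat.zero_le _) (Finset.mem_univ i0))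
    · exact Finset.sum_le_sum (fun i _ => hℓ2 i)
    · intro n
      exact ⟨D (e n), fun j => by
        rcases lt_trichotomy j (e n).1 with hj | hj | hj
        · rw [hDlt _ j hj]; exact (h j).2.2.1 _ (hT j) _ (hU j)
        · subst hj; rw [hDi]; exact hRmem _ _
        · rw [hDgt _ j hj]; exact hT j, rfl⟩
    · intro n n' hnn
      exact hCdisj (e n) (e n') (fun hc => hnn (e.injective hc))
    · rw [hCunion]
      ext x
      simp only [Set.mem_iUnion]
      constructor
      · rintro ⟨p, hp⟩; exact ⟨e.symm p, by simpa using hp⟩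
      · rintro ⟨n, hn⟩; exact ⟨e n, hn⟩
end

section
/- Let (Ω, F, P) be a probability space. The family Σ_□ = {S × T : S, T ∈ F and either S = T or S ∩ T = ∅} is a 4-semiring on Ω × Ω, and for every integrable random variable f : Ω × Ω → ℝ (with respect to the product measure), we have ‖f‖_{Σ_□} ≤ ‖f‖_□ ≤ 4 ‖f‖_{Σ_□}, where ‖f‖_□ = sup{ |∫_{S×T} f dP⊗P| : S, T ∈ F } and ‖f‖_{Σ_□} = sup{ |∫_R f dP⊗P| : R ∈ Σ_□ }. -/
open MeasureTheory Set

/-- The `𝒮`-uniformity seminorm of `f`. -/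
noncomputable def unifNorm {Ω : Type*} [MeasurableSpace Ω] (P : Measure Ω)
    (𝒮 : Set (Set Ω)) (f : Ω → ℝ) : ℝ :=
  sSup {r | ∃ A ∈ 𝒮, r = |∫ x in A, f x ∂P|}

private lemma disjFin4 {α : Type*} {A B C D : Set α}
    (hAB : Disjoint A B) (hAC : Disjoint A C) (hAD : Disjoint A D)
    (hBC : Disjoint B C) (hBD : Disjoint B D) (hCD : Disjoint C D) :
    ∀ i j : Fin 4, i ≠ j → Disjoint (![A,B,C,D] i) (![A,B,C,D] j) := by
  intro i j hij
  fin_cases i <;> fin_cases j <;>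
    first
      | exact absurd rfl hij
      | assumption
      | exact hAB.symm
      | exact hAC.symm
      | exact hAD.symm
      | exact hBC.symm
      | exact hBD.symm
      | exact hCD.symm

private lemma disjPt {α : Type*} {A B : Set α} (h : ∀ x, x ∈ A → x ∉ B) : Disjoint A B :=
  Set.disjoint_left.2 h

private lemma dDiffInter {α : Type*} (s t : Set α) : Disjoint (s \ t) (s ∩ t) :=
  disjPt fun x hx hx' => hx.2 hx'.2

private lemma dInterDiff {α : Type*} (s t : Set α) : Disjoint (s ∩ t) (s \ t) :=
  (dDiffInter s t).symm

private lemma dInterDiff' {α : Type*} (s t : Set α) : Disjoint (s ∩ t) (t \ s) :=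
  disjPt fun x hx hx' => hx'.2 hx.1

private lemma dDiffSelf {α : Type*} (s t : Set α) : Disjoint (s \ t) t :=
  disjPt fun x hx hx' => hx.2 hx'

private lemma abs_add4 (a b c d : ℝ) : |(a + b) + (c + d)| ≤ |a| + |b| + |c| + |d| :=
  calc |(a + b) + (c + d)| ≤ |a + b| + |c + d| := abs_add_le _ _
    _ ≤ (|a| + |b|) + (|c| + |d|) := add_le_add (abs_add_le _ _) (abs_add_le _ _)
    _ = |a| + |b| + |c| + |d| := by ring

private lemma unionFin4 {α : Type*} (A B C D : Set α) :
    (⋃ i, ![A,B,C,D] i) = A ∪ B ∪ C ∪ D := by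
  ext x
  simp [Fin.exists_fin_succ, or_assoc]


set_option maxHeartbeats 1600000 in
theorem stmt7 {Ω : Type*} [MeasurableSpace Ω] (P : Measure Ω) [IsProbabilityMeasure P]
    (f : Ω × Ω → ℝ) (hf : Integrable f (P.prod P)) :
    IsSemiring 4
      {A : Set (Ω × Ω) | ∃ S T : Set Ω, MeasurableSet S ∧ MeasurableSet T ∧
        (S = T ∨ S ∩ T = ∅) ∧ A = S ×ˢ T} ∧
    unifNorm (P.prod P)
        {A : Set (Ω × Ω) | ∃ S T : Set Ω, MeasurableSet S ∧ MeasurableSet T ∧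
          (S = T ∨ S ∩ T = ∅) ∧ A = S ×ˢ T} f ≤
      unifNorm (P.prod P)
        {A : Set (Ω × Ω) | ∃ S T : Set Ω, MeasurableSet S ∧ MeasurableSet T ∧ A = S ×ˢ T} f ∧
    unifNorm (P.prod P)
        {A : Set (Ω × Ω) | ∃ S T : Set Ω, MeasurableSet S ∧ MeasurableSet T ∧ A = S ×ˢ T} f ≤
      4 * unifNorm (P.prod P)
        {A : Set (Ω × Ω) | ∃ S T : Set Ω, MeasurableSet S ∧ MeasurableSet T ∧
          (S = T ∨ S ∩ T = ∅) ∧ A = S ×ˢ T} f := by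
  set 𝒮 : Set (Set (Ω × Ω)) := {A | ∃ S T : Set Ω, MeasurableSet S ∧ MeasurableSet T ∧
      (S = T ∨ S ∩ T = ∅) ∧ A = S ×ˢ T} with h𝒮
  set 𝒯 : Set (Set (Ω × Ω)) := {A | ∃ S T : Set Ω, MeasurableSet S ∧ MeasurableSet T ∧
      A = S ×ˢ T} with h𝒯
  have hempty : (∅ : Set (Ω × Ω)) ∈ 𝒮 :=
    ⟨∅, ∅, MeasurableSet.empty, MeasurableSet.empty, Or.inl rfl, by simp⟩
  have huniv : (univ : Set (Ω × Ω)) ∈ 𝒮 :=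
    ⟨univ, univ, MeasurableSet.univ, MeasurableSet.univ, Or.inl rfl, by simp [Set.prod_eq]⟩
  -- boundedness of the sup sets
  have hbdd : ∀ 𝒰 : Set (Set (Ω × Ω)), 𝒰 ⊆ 𝒯 →
      BddAbove {r | ∃ A ∈ 𝒰, r = |∫ x in A, f x ∂(P.prod P)|} := by
    intro 𝒰 h𝒰
    refine ⟨∫ x, ‖f x‖ ∂(P.prod P), ?_⟩
    rintro r ⟨A, hA, rfl⟩
    obtain ⟨S, T, hS, hT, rfl⟩ := h𝒰 hA
    calc |∫ x in S ×ˢ T, f x ∂(P.prod P)| ≤ ∫ x in S ×ˢ T, ‖f x‖ ∂(P.prod P) :=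
          norm_integral_le_integral_norm f
      _ ≤ ∫ x, ‖f x‖ ∂(P.prod P) :=
          setIntegral_le_integral hf.norm (Filter.Eventually.of_forall fun x => norm_nonneg _)
  have h𝒮𝒯 : 𝒮 ⊆ 𝒯 := by
    rintro A ⟨S, T, hS, hT, -, rfl⟩; exact ⟨S, T, hS, hT, rfl⟩
  have hne : (0:ℝ) ∈ {r | ∃ A ∈ 𝒮, r = |∫ x in A, f x ∂(P.prod P)|} :=
    ⟨∅, hempty, by simp⟩
  simp only [unifNorm, IsSemiring]
  refine ⟨⟨hempty, huniv, ?_, ?_⟩, ?_, ?_⟩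
  · -- intersections
    rintro A ⟨S₁, T₁, hS₁, hT₁, hc₁, rfl⟩ B ⟨S₂, T₂, hS₂, hT₂, hc₂, rfl⟩
    refine ⟨S₁ ∩ S₂, T₁ ∩ T₂, hS₁.inter hS₂, hT₁.inter hT₂, ?_, by rw [Set.prod_inter_prod]⟩
    rcases hc₁ with rfl | h₁
    · rcases hc₂ with rfl | h₂
      · exact Or.inl rfl
      · refine Or.inr (Set.eq_empty_of_subset_empty ?_)
        rw [← h₂]; intro x hx; exact ⟨hx.1.2, hx.2.2⟩
    · refine Or.inr (Set.eq_empty_of_subset_empty ?_)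
      rw [← h₁]; intro x hx; exact ⟨hx.1.1, hx.2.1⟩
  · -- differences
    rintro A ⟨S₁, T₁, hS₁, hT₁, hc₁, rfl⟩ B ⟨S₂, T₂, hS₂, hT₂, hc₂, rfl⟩
    refine ⟨4, by norm_num, le_refl 4, ?_⟩
    rcases hc₁ with rfl | h₁
    · rcases hc₂ with rfl | h₂
      · -- S₁ = T₁, S₂ = T₂
        refine ⟨![(S₁ \ S₂) ×ˢ (S₁ \ S₂), (S₁ \ S₂) ×ˢ (S₁ ∩ S₂),
            (S₁ ∩ S₂) ×ˢ (S₁ \ S₂), ∅], ?_, ?_, ?_⟩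
        · intro i
          fin_cases i
          · exact ⟨_, _, hS₁.diff hS₂, hS₁.diff hS₂, Or.inl rfl, rfl⟩
          · exact ⟨_, _, hS₁.diff hS₂, hS₁.inter hS₂, Or.inr (by
              ext x; simp; tauto), rfl⟩
          · exact ⟨_, _, hS₁.inter hS₂, hS₁.diff hS₂, Or.inr (by
              ext x; simp; tauto), rfl⟩
          · exact hempty
        · exact disjFin4
            (Set.disjoint_prod.2 (Or.inr (dDiffInter S₁ S₂)))
            (Set.disjoint_prod.2 (Or.inl (dDiffInter S₁ S₂)))
            (by simp) (Set.disjoint_prod.2 (Or.inl (dDiffInter S₁ S₂)))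
            (by simp) (by simp)
        · rw [unionFin4]
          ext ⟨x, y⟩
          simp [Set.mem_prod]
          tauto
      · -- S₁ = T₁, S₂ ∩ T₂ = ∅
        have h₂' : ∀ z, z ∈ S₂ → z ∉ T₂ := fun z hz hz' =>
          (Set.eq_empty_iff_forall_notMem.1 h₂) z ⟨hz, hz'⟩
        refine ⟨![(S₁ \ (S₁ ∩ S₂)) ×ˢ (S₁ \ (S₁ ∩ S₂)), (S₁ \ (S₁ ∩ S₂)) ×ˢ (S₁ ∩ S₂),
            (S₁ ∩ S₂) ×ˢ (S₁ ∩ S₂), (S₁ ∩ S₂) ×ˢ (S₁ \ (S₂ ∪ T₂))], ?_, ?_, ?_⟩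
        · intro i
          fin_cases i
          · exact ⟨_, _, hS₁.diff (hS₁.inter hS₂), hS₁.diff (hS₁.inter hS₂), Or.inl rfl, rfl⟩
          · exact ⟨_, _, hS₁.diff (hS₁.inter hS₂), hS₁.inter hS₂, Or.inr (by
              ext x; simp; tauto), rfl⟩
          · exact ⟨_, _, hS₁.inter hS₂, hS₁.inter hS₂, Or.inl rfl, rfl⟩
          · exact ⟨_, _, hS₁.inter hS₂, hS₁.diff (hS₂.union hT₂), Or.inr (by
              ext x; simp; tauto), rfl⟩
        · exact disjFin4
            (Set.disjoint_prod.2 (Or.inr (dDiffSelf S₁ (S₁ ∩ S₂))))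
            (Set.disjoint_prod.2 (Or.inl (dDiffSelf S₁ (S₁ ∩ S₂))))
            (Set.disjoint_prod.2 (Or.inl (dDiffSelf S₁ (S₁ ∩ S₂))))
            (Set.disjoint_prod.2 (Or.inl (dDiffSelf S₁ (S₁ ∩ S₂))))
            (Set.disjoint_prod.2 (Or.inl (dDiffSelf S₁ (S₁ ∩ S₂))))
            (Set.disjoint_prod.2 (Or.inr (disjPt fun z hz hz' => hz'.2 (Or.inl hz.2))))
        · rw [unionFin4]
          ext ⟨x, y⟩
          have hx2 := h₂' x
          have hy2 := h₂' y
          simp [Set.mem_prod]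
          tauto
    · -- S₁ ∩ T₁ = ∅
      have h₁' : ∀ z, z ∈ S₁ → z ∉ T₁ := fun z hz hz' =>
        (Set.eq_empty_iff_forall_notMem.1 h₁) z ⟨hz, hz'⟩
      have hsub : ∀ U V : Set Ω, U ⊆ S₁ → V ⊆ T₁ → MeasurableSet U → MeasurableSet V →
          U ×ˢ V ∈ 𝒮 := by
        intro U V hU hV hUm hVm
        refine ⟨U, V, hUm, hVm, Or.inr ?_, rfl⟩
        ext z; simp only [Set.mem_inter_iff, Set.mem_empty_iff_false, iff_false, not_and]
        exact fun hz hz' => h₁' z (hU hz) (hV hz')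
      refine ⟨![(S₁ \ S₂) ×ˢ (T₁ \ T₂), (S₁ \ S₂) ×ˢ (T₁ ∩ T₂),
          (S₁ ∩ S₂) ×ˢ (T₁ \ T₂), ∅], ?_, ?_, ?_⟩
      · intro i
        fin_cases i
        · exact hsub _ _ Set.diff_subset Set.diff_subset (hS₁.diff hS₂) (hT₁.diff hT₂)
        · exact hsub _ _ Set.diff_subset Set.inter_subset_left (hS₁.diff hS₂) (hT₁.inter hT₂)
        · exact hsub _ _ Set.inter_subset_left Set.diff_subset (hS₁.inter hS₂) (hT₁.diff hT₂)
        · exact hempty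
      · exact disjFin4
          (Set.disjoint_prod.2 (Or.inr (dDiffInter T₁ T₂)))
          (Set.disjoint_prod.2 (Or.inl (dDiffInter S₁ S₂)))
          (by simp) (Set.disjoint_prod.2 (Or.inl (dDiffInter S₁ S₂)))
          (by simp) (by simp)
      · rw [unionFin4]
        ext ⟨x, y⟩
        simp [Set.mem_prod]
        tauto
  · -- 𝒮-norm ≤ box norm
    refine csSup_le_csSup (hbdd 𝒯 le_rfl) ⟨0, hne⟩ ?_
    rintro r ⟨A, hA, rfl⟩
    exact ⟨A, h𝒮𝒯 hA, rfl⟩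
  · -- box norm ≤ 4 * 𝒮-norm
    set M := sSup {r | ∃ A ∈ 𝒮, r = |∫ x in A, f x ∂(P.prod P)|} with hM
    have hmem_le : ∀ A ∈ 𝒮, |∫ x in A, f x ∂(P.prod P)| ≤ M :=
      fun A hA => le_csSup (hbdd 𝒮 h𝒮𝒯) ⟨A, hA, rfl⟩
    refine csSup_le ⟨0, ∅, h𝒮𝒯 hempty, by simp⟩ ?_
    rintro r ⟨A, ⟨S, T, hS, hT, rfl⟩, rfl⟩
    -- decompose S ×ˢ T
    have hST : S ×ˢ T = ((S ∩ T) ×ˢ T) ∪ ((S \ T) ×ˢ T) := by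
      rw [← Set.union_prod, Set.inter_union_diff]
    have hT1 : (S ∩ T) ×ˢ T = ((S ∩ T) ×ˢ (S ∩ T)) ∪ ((S ∩ T) ×ˢ (T \ S)) := by
      rw [← Set.prod_union]
      congr 1
      rw [Set.inter_comm, Set.inter_union_diff]
    have hT2 : (S \ T) ×ˢ T = ((S \ T) ×ˢ (S ∩ T)) ∪ ((S \ T) ×ˢ (T \ S)) := by
      rw [← Set.prod_union]
      congr 1
      rw [Set.inter_comm, Set.inter_union_diff]
    have hi : ∀ U V : Set Ω, MeasurableSet U → MeasurableSet V →
        IntegrableOn f (U ×ˢ V) (P.prod P) :=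
      fun U V hU hV => hf.integrableOn
    have e1 : ∫ x in S ×ˢ T, f x ∂(P.prod P) =
        ∫ x in (S ∩ T) ×ˢ T, f x ∂(P.prod P) + ∫ x in (S \ T) ×ˢ T, f x ∂(P.prod P) := by
      rw [hST]
      exact setIntegral_union ((Set.disjoint_prod).2 (Or.inl (dInterDiff S T)))
        ((hS.diff hT).prod hT) (hi _ _ (hS.inter hT) hT) (hi _ _ (hS.diff hT) hT)
    have e2 : ∫ x in (S ∩ T) ×ˢ T, f x ∂(P.prod P) =
        ∫ x in (S ∩ T) ×ˢ (S ∩ T), f x ∂(P.prod P) +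
        ∫ x in (S ∩ T) ×ˢ (T \ S), f x ∂(P.prod P) := by
      rw [hT1]
      exact setIntegral_union ((Set.disjoint_prod).2 (Or.inr (dInterDiff' S T)))
        ((hS.inter hT).prod (hT.diff hS)) (hi _ _ (hS.inter hT) (hS.inter hT))
        (hi _ _ (hS.inter hT) (hT.diff hS))
    have e3 : ∫ x in (S \ T) ×ˢ T, f x ∂(P.prod P) =
        ∫ x in (S \ T) ×ˢ (S ∩ T), f x ∂(P.prod P) +
        ∫ x in (S \ T) ×ˢ (T \ S), f x ∂(P.prod P) := by
      rw [hT2]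
      exact setIntegral_union ((Set.disjoint_prod).2 (Or.inr (dInterDiff' S T)))
        ((hS.diff hT).prod (hT.diff hS)) (hi _ _ (hS.diff hT) (hS.inter hT))
        (hi _ _ (hS.diff hT) (hT.diff hS))
    have m1 : (S ∩ T) ×ˢ (S ∩ T) ∈ 𝒮 :=
      ⟨_, _, hS.inter hT, hS.inter hT, Or.inl rfl, rfl⟩
    have m2 : (S ∩ T) ×ˢ (T \ S) ∈ 𝒮 :=
      ⟨_, _, hS.inter hT, hT.diff hS, Or.inr (by ext z; simp; tauto), rfl⟩
    have m3 : (S \ T) ×ˢ (S ∩ T) ∈ 𝒮 :=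
      ⟨_, _, hS.diff hT, hS.inter hT, Or.inr (by ext z; simp; tauto), rfl⟩
    have m4 : (S \ T) ×ˢ (T \ S) ∈ 𝒮 :=
      ⟨_, _, hS.diff hT, hT.diff hS, Or.inr (by ext z; simp; tauto), rfl⟩
    calc |∫ x in S ×ˢ T, f x ∂(P.prod P)|
        = |(∫ x in (S ∩ T) ×ˢ (S ∩ T), f x ∂(P.prod P) +
            ∫ x in (S ∩ T) ×ˢ (T \ S), f x ∂(P.prod P)) +
           (∫ x in (S \ T) ×ˢ (S ∩ T), f x ∂(P.prod P) +
            ∫ x in (S \ T) ×ˢ (T \ S), f x ∂(P.prod P))| := by rw [e1, e2, e3]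
      _ ≤ |∫ x in (S ∩ T) ×ˢ (S ∩ T), f x ∂(P.prod P)| +
          |∫ x in (S ∩ T) ×ˢ (T \ S), f x ∂(P.prod P)| +
          |∫ x in (S \ T) ×ˢ (S ∩ T), f x ∂(P.prod P)| +
          |∫ x in (S \ T) ×ˢ (T \ S), f x ∂(P.prod P)| := by
            exact abs_add4 _ _ _ _
      _ ≤ M + M + M + M := by
            gcongr
            exacts [hmem_le _ m1, hmem_le _ m2, hmem_le _ m3, hmem_le _ m4]
      _ = 4 * M := by ring
end

section
/- Let (Ω, F, P) be a probability space, S a k-semiring on Ω with S ⊆ F, and f ∈ L¹(Ω, F, P). If B is a σ-algebra on Ω with B ⊆ S, then ‖E(f | B)‖_S ≤ ‖f‖_S. -/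
open MeasureTheory Set

theorem stmt9_aux {Ω : Type*} (m : MeasurableSpace Ω) {mΩ : MeasurableSpace Ω}
    (P : Measure Ω) [IsProbabilityMeasure P]
    {𝒮 : Set (Set Ω)} (hempty : ∅ ∈ 𝒮)
    (h𝒮 : ∀ A ∈ 𝒮, MeasurableSet A)
    (hm : m ≤ mΩ)
    (hB : ∀ A : Set Ω, MeasurableSet[m] A → A ∈ 𝒮)
    (f : Ω → ℝ) (hf : Integrable f P) :
    unifNorm P 𝒮 (P[f|m]) ≤ unifNorm P 𝒮 f := by
  set g : Ω → ℝ := P[f|m] with hg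
  have hgint : Integrable g P := integrable_condExp
  have hgsm : StronglyMeasurable[m] g := stronglyMeasurable_condExp
  set Pos : Set Ω := {x | 0 < g x} with hPos
  set Neg : Set Ω := {x | g x < 0} with hNeg
  have hPosm : MeasurableSet[m] Pos :=
    measurableSet_lt measurable_const hgsm.measurable
  have hNegm : MeasurableSet[m] Neg :=
    measurableSet_lt hgsm.measurable measurable_const
  have hPosM : MeasurableSet Pos := hm _ hPosm
  have hNegM : MeasurableSet Neg := hm _ hNegm
  have hbdd : BddAbove {r | ∃ A ∈ 𝒮, r = |∫ x in A, f x ∂P|} := by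
    refine ⟨∫ x, |f x| ∂P, ?_⟩
    rintro r ⟨A, _, rfl⟩
    calc |∫ x in A, f x ∂P| ≤ ∫ x in A, |f x| ∂P := by
          simpa using norm_integral_le_integral_norm (μ := P.restrict A) f
      _ ≤ ∫ x, |f x| ∂P :=
          setIntegral_le_integral hf.abs (Filter.Eventually.of_forall fun x => abs_nonneg _)
  have key_le : ∀ A : Set Ω, MeasurableSet A → ∫ x in A, g x ∂P ≤ ∫ x in Pos, g x ∂P := by
    intro A hA
    have hsplit : (∫ x in A ∩ Pos, g x ∂P) + ∫ x in A \ Pos, g x ∂P = ∫ x in A, g x ∂P :=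
      integral_inter_add_diff hPosM hgint.integrableOn
    have h1 : ∫ x in A ∩ Pos, g x ∂P ≤ ∫ x in Pos, g x ∂P := by
      refine setIntegral_mono_set hgint.integrableOn ?_
        (Filter.Eventually.of_forall fun x hx => hx.2)
      exact (ae_restrict_iff' hPosM).2 (Filter.Eventually.of_forall fun x hx => le_of_lt hx)
    have h2 : ∫ x in A \ Pos, g x ∂P ≤ 0 := by
      refine setIntegral_nonpos (hA.diff hPosM) fun x hx => ?_
      have := hx.2
      simpa [hPos, not_lt] using this
    linarith
  have key_ge : ∀ A : Set Ω, MeasurableSet A → ∫ x in Neg, g x ∂P ≤ ∫ x in A, g x ∂P := by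
    intro A hA
    have hsplit : (∫ x in A ∩ Neg, g x ∂P) + ∫ x in A \ Neg, g x ∂P = ∫ x in A, g x ∂P :=
      integral_inter_add_diff hNegM hgint.integrableOn
    have h1 : ∫ x in Neg, g x ∂P ≤ ∫ x in A ∩ Neg, g x ∂P := by
      have hmono := setIntegral_mono_set (f := fun x => -g x) hgint.neg.integrableOn
        ((ae_restrict_iff' hNegM).2 (Filter.Eventually.of_forall fun x hx => by
          simpa using le_of_lt hx))
        (Filter.Eventually.of_forall fun x (hx : x ∈ A ∩ Neg) => hx.2)
      simp only [integral_neg, neg_le_neg_iff] at hmono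
      exact hmono
    have h2 : 0 ≤ ∫ x in A \ Neg, g x ∂P := by
      refine setIntegral_nonneg (hA.diff hNegM) fun x hx => ?_
      have := hx.2
      simpa [hNeg, not_lt] using this
    linarith
  have hPosf : ∫ x in Pos, g x ∂P = ∫ x in Pos, f x ∂P := setIntegral_condExp hm hf hPosm
  have hNegf : ∫ x in Neg, g x ∂P = ∫ x in Neg, f x ∂P := setIntegral_condExp hm hf hNegm
  have hPmem : |∫ x in Pos, f x ∂P| ≤ unifNorm P 𝒮 f :=
    le_csSup hbdd ⟨Pos, hB _ hPosm, rfl⟩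
  have hNmem : |∫ x in Neg, f x ∂P| ≤ unifNorm P 𝒮 f :=
    le_csSup hbdd ⟨Neg, hB _ hNegm, rfl⟩
  refine csSup_le ⟨0, ∅, hempty, by simp⟩ ?_
  rintro r ⟨A, hA, rfl⟩
  have hAm : MeasurableSet A := h𝒮 _ hA
  rcases abs_cases (∫ x in A, g x ∂P) with ⟨heq, _⟩ | ⟨heq, _⟩
  · rw [heq]
    calc ∫ x in A, g x ∂P ≤ ∫ x in Pos, g x ∂P := key_le A hAm
      _ = ∫ x in Pos, f x ∂P := hPosf
      _ ≤ |∫ x in Pos, f x ∂P| := le_abs_self _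
      _ ≤ unifNorm P 𝒮 f := hPmem
  · rw [heq]
    calc -∫ x in A, g x ∂P ≤ -∫ x in Neg, g x ∂P := neg_le_neg (key_ge A hAm)
      _ = -∫ x in Neg, f x ∂P := by rw [hNegf]
      _ ≤ |∫ x in Neg, f x ∂P| := neg_le_abs _
      _ ≤ unifNorm P 𝒮 f := hNmem

theorem stmt9 {Ω : Type*} {mΩ : MeasurableSpace Ω} (P : Measure Ω) [IsProbabilityMeasure P]
    {k : ℕ} (hk : 1 ≤ k) {𝒮 : Set (Set Ω)} (h : IsSemiring k 𝒮)
    (h𝒮 : ∀ A ∈ 𝒮, MeasurableSet A)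
    (m : MeasurableSpace Ω) (hm : m ≤ mΩ)
    (hB : ∀ A : Set Ω, MeasurableSet[m] A → A ∈ 𝒮)
    (f : Ω → ℝ) (hf : Integrable f P) :
    @unifNorm Ω mΩ P 𝒮 (P[f|m]) ≤ @unifNorm Ω mΩ P 𝒮 f :=
  stmt9_aux m P h.1 h𝒮 hm hB f hf
end

section
/- Let (Ω, F, P) be a probability space, k a positive integer, p ≥ 1, and 0 < δ ≤ 1. Let Σ be a k-semiring on Ω with Σ ⊆ F, let Q be a finite partition of Ω with Q ⊆ Σ, and let f ∈ L^p(Ω, F, P) with ‖f − E(f | A_Q)‖_Σ > δ. Then there exists a refinement R of Q with R ⊆ Σ, |R| ≤ |Q| (k+1), and ‖E(f | A_R) − E(f | A_Q)‖_{L^p} > δ. -/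
open MeasureTheory Set

/-!
Pick `S ∈ Σ` with `|∫_S (f - E(f | A_Q))| > δ`. Splitting every block `A` of `Q` into `A ∩ S`
and the at most `k` members of `Σ` that partition `A \ S` gives a partition `R ⊆ Σ` refining `Q`
with `|R| ≤ |Q| (k + 1)` in which `S` is `A_R`-measurable. Hence `∫_S E(f | A_R) = ∫_S f`, so
`∫_S (E(f | A_R) - E(f | A_Q)) = ∫_S (f - E(f | A_Q))`, and the left side is bounded by the
`L¹` norm, hence by the `Lᵖ` norm, of `E(f | A_R) - E(f | A_Q)`.
-/

theorem pairwise_disjoint_finset_biUnion {Ω : Type*} [DecidableEq (Set Ω)]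
    {Q : Finset (Set Ω)} {T : Set Ω → Finset (Set Ω)}
    (hQ : (Q : Set (Set Ω)).Pairwise Disjoint)
    (hT : ∀ A ∈ Q, (T A : Set (Set Ω)).Pairwise Disjoint) (hTA : ∀ A ∈ Q, ∀ B ∈ T A, B ⊆ A) :
    (Q.biUnion T : Set (Set Ω)).Pairwise Disjoint := by
  rw [Finset.coe_biUnion]
  refine PairwiseDisjoint.biUnion_finset (f := id) ?_ hT
  exact PairwiseDisjoint.mono_on hQ fun A hA => Finset.sup_le (hTA A hA)

namespace IsSemiring

variable {Ω : Type*} {k : ℕ} {𝒮 : Set (Set Ω)}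

theorem exists_finset_sUnion_eq_diff (h𝒮 : IsSemiring k 𝒮) {A B : Set Ω} (hA : A ∈ 𝒮)
    (hB : B ∈ 𝒮) :
    ∃ T : Finset (Set Ω), (T : Set (Set Ω)) ⊆ 𝒮 ∧ (T : Set (Set Ω)).Pairwise Disjoint ∧
      T.card ≤ k ∧ ⋃₀ (T : Set (Set Ω)) = A \ B := by
  classical
  obtain ⟨ℓ, -, hℓk, R, hR𝒮, hRdisj, hAB⟩ := h𝒮.2.2.2 A hA B hB
  refine ⟨Finset.univ.image R, ?_, ?_, ?_, ?_⟩
  · rintro _ hC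
    obtain ⟨i, -, rfl⟩ := Finset.mem_image.1 hC
    exact hR𝒮 i
  · rintro _ hC _ hD hCD
    obtain ⟨i, -, rfl⟩ := Finset.mem_image.1 hC
    obtain ⟨j, -, rfl⟩ := Finset.mem_image.1 hD
    exact hRdisj i j fun hij => hCD (hij ▸ rfl)
  · exact Finset.card_image_le.trans (by simpa using hℓk)
  · simp [hAB]

theorem exists_finset_sUnion_eq_of_inter_mem (h𝒮 : IsSemiring k 𝒮) {A S : Set Ω} (hA : A ∈ 𝒮)
    (hS : S ∈ 𝒮) :
    ∃ T : Finset (Set Ω), (T : Set (Set Ω)) ⊆ 𝒮 ∧ (T : Set (Set Ω)).Pairwise Disjoint ∧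
      T.card ≤ k + 1 ∧ ⋃₀ (T : Set (Set Ω)) = A ∧ A ∩ S ∈ T := by
  classical
  obtain ⟨T, hT𝒮, hTdisj, hTcard, hTU⟩ := h𝒮.exists_finset_sUnion_eq_diff hA hS
  refine ⟨insert (A ∩ S) T, ?_, ?_, ?_, ?_, Finset.mem_insert_self _ _⟩
  · rw [Finset.coe_insert]
    exact insert_subset (h𝒮.2.2.1 A hA S hS) hT𝒮
  · rw [Finset.coe_insert, pairwise_insert_of_symm]
    refine ⟨hTdisj, fun C hC _ => ?_⟩
    have hCsub : C ⊆ A \ S := hTU ▸ subset_sUnion_of_mem hC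
    exact disjoint_sdiff_inter.symm.mono_right hCsub
  · exact (Finset.card_insert_le _ _).trans (Nat.add_le_add_right hTcard 1)
  · rw [Finset.coe_insert, sUnion_insert, hTU, inter_union_sdiff]

theorem exists_refinement_measurableSet (h𝒮 : IsSemiring k 𝒮) {Q : Finset (Set Ω)}
    (hQ𝒮 : (Q : Set (Set Ω)) ⊆ 𝒮) (hQdisj : (Q : Set (Set Ω)).Pairwise Disjoint)
    (hQcov : ⋃₀ (Q : Set (Set Ω)) = univ) {S : Set Ω} (hS : S ∈ 𝒮) :
    ∃ R : Finset (Set Ω), (R : Set (Set Ω)) ⊆ 𝒮 ∧ (R : Set (Set Ω)).Pairwise Disjoint ∧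
      ⋃₀ (R : Set (Set Ω)) = univ ∧ (∀ B ∈ R, ∃ A ∈ Q, B ⊆ A) ∧ R.card ≤ Q.card * (k + 1) ∧
      MeasurableSet[MeasurableSpace.generateFrom (R : Set (Set Ω))] S := by
  classical
  have hblocks (A) (hA : A ∈ Q) := h𝒮.exists_finset_sUnion_eq_of_inter_mem (hQ𝒮 hA) hS
  choose! T hT𝒮 hTdisj hTcard hTU hTS using hblocks
  have hTA : ∀ A ∈ Q, ∀ B ∈ T A, B ⊆ A := fun A hA B hB => hTU A hA ▸ subset_sUnion_of_mem hB
  refine ⟨Q.biUnion T, ?_, pairwise_disjoint_finset_biUnion hQdisj hTdisj hTA, ?_, ?_, ?_, ?_⟩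
  · simpa [Finset.coe_biUnion] using hT𝒮
  · rw [Finset.coe_biUnion, sUnion_iUnion, ← hQcov, sUnion_eq_biUnion]
    simp_rw [sUnion_iUnion]
    exact iUnion₂_congr hTU
  · intro B hB
    obtain ⟨A, hA, hBA⟩ := Finset.mem_biUnion.1 hB
    exact ⟨A, hA, hTA A hA B hBA⟩
  · calc (Q.biUnion T).card ≤ ∑ A ∈ Q, (T A).card := Finset.card_biUnion_le
      _ ≤ ∑ _A ∈ Q, (k + 1) := Finset.sum_le_sum hTcard
      _ = Q.card * (k + 1) := by rw [Finset.sum_const, smul_eq_mul]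
  · have hSU : S = ⋃ A ∈ Q, A ∩ S := by
      rw [← iUnion₂_inter, ← Finset.set_biUnion_coe, ← sUnion_eq_biUnion, hQcov, univ_inter]
    rw [hSU]
    exact Finset.measurableSet_biUnion Q fun A hA =>
      MeasurableSpace.measurableSet_generateFrom (Finset.mem_biUnion.2 ⟨A, hA, hTS A hA⟩)

end IsSemiring

theorem exists_mem_lt_abs_setIntegral_of_lt_unifNorm {Ω : Type*} [MeasurableSpace Ω]
    {P : Measure Ω} {𝒮 : Set (Set Ω)} (h𝒮 : 𝒮.Nonempty) {g : Ω → ℝ} {δ : ℝ}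
    (hδ : δ < unifNorm P 𝒮 g) : ∃ A ∈ 𝒮, δ < |∫ x in A, g x ∂P| := by
  obtain ⟨A, hA⟩ := h𝒮
  have hne : {r | ∃ A ∈ 𝒮, r = |∫ x in A, g x ∂P|}.Nonempty := ⟨_, A, hA, rfl⟩
  obtain ⟨_, ⟨B, hB, rfl⟩, hδB⟩ := exists_lt_of_lt_csSup hne hδ
  exact ⟨B, hB, hδB⟩

section

variable {Ω E : Type*} {m m₀ : MeasurableSpace Ω} {μ : Measure Ω}
  [NormedAddCommGroup E] [NormedSpace ℝ E]

theorem setIntegral_condExp_sub [CompleteSpace E] (hm : m ≤ m₀) [SigmaFinite (μ.trim hm)]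
    {f g : Ω → E} (hf : Integrable f μ) (hg : Integrable g μ) {s : Set Ω}
    (hs : MeasurableSet[m] s) : ∫ x in s, (μ[f|m] - g) x ∂μ = ∫ x in s, (f - g) x ∂μ := by
  simp only [Pi.sub_apply]
  rw [integral_sub integrable_condExp.integrableOn hg.integrableOn,
    integral_sub hf.integrableOn hg.integrableOn, setIntegral_condExp hm hf hs]

theorem enorm_setIntegral_le_eLpNorm [IsProbabilityMeasure μ] {p : ENNReal} (hp : 1 ≤ p)
    {f : Ω → E} (hf : AEStronglyMeasurable f μ) (s : Set Ω) :
    ‖∫ x in s, f x ∂μ‖ₑ ≤ eLpNorm f p μ :=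
  calc ‖∫ x in s, f x ∂μ‖ₑ ≤ ∫⁻ x in s, ‖f x‖ₑ ∂μ := enorm_integral_le_lintegral_enorm _
    _ ≤ ∫⁻ x, ‖f x‖ₑ ∂μ := setLIntegral_le_lintegral s _
    _ = eLpNorm f 1 μ := eLpNorm_one_eq_lintegral_enorm.symm
    _ ≤ eLpNorm f p μ := eLpNorm_le_eLpNorm_of_exponent_le hp hf

end

theorem stmt12_general {Ω : Type*} [MeasurableSpace Ω] (P : Measure Ω) [IsProbabilityMeasure P]
    {k : ℕ} {p : ℝ} (hp : 1 ≤ p) {δ : ℝ} (hδ0 : 0 < δ)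
    {𝒮 : Set (Set Ω)} (hS : IsSemiring k 𝒮) (hSm : ∀ A ∈ 𝒮, MeasurableSet A)
    (Q : Finset (Set Ω)) (hQS : (Q : Set (Set Ω)) ⊆ 𝒮)
    (hQdisj : (Q : Set (Set Ω)).Pairwise Disjoint) (hQcov : ⋃₀ (Q : Set (Set Ω)) = Set.univ)
    (f : Ω → ℝ) (hf : MemLp f (ENNReal.ofReal p) P)
    (hbig : unifNorm P 𝒮 (f - P[f | MeasurableSpace.generateFrom (Q : Set (Set Ω))]) > δ) :
    ∃ R : Finset (Set Ω), (R : Set (Set Ω)) ⊆ 𝒮 ∧ (R : Set (Set Ω)).Pairwise Disjoint ∧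
      ⋃₀ (R : Set (Set Ω)) = Set.univ ∧ (∀ B ∈ R, ∃ A ∈ Q, B ⊆ A) ∧ R.card ≤ Q.card * (k + 1) ∧
      ENNReal.ofReal δ <
        eLpNorm (P[f | MeasurableSpace.generateFrom (R : Set (Set Ω))]
          - P[f | MeasurableSpace.generateFrom (Q : Set (Set Ω))]) (ENNReal.ofReal p) P := by
  set fQ := P[f | MeasurableSpace.generateFrom (Q : Set (Set Ω))]
  obtain ⟨S, hS𝒮, hδS⟩ := exists_mem_lt_abs_setIntegral_of_lt_unifNorm ⟨∅, hS.1⟩ hbig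
  obtain ⟨R, hR𝒮, hRdisj, hRcov, hRQ, hRcard, hSR⟩ :=
    hS.exists_refinement_measurableSet hQS hQdisj hQcov hS𝒮
  refine ⟨R, hR𝒮, hRdisj, hRcov, hRQ, hRcard, ?_⟩
  have hRm : MeasurableSpace.generateFrom (R : Set (Set Ω)) ≤ ‹_› :=
    MeasurableSpace.generateFrom_le fun B hB => hSm B (hR𝒮 hB)
  have hp' : 1 ≤ ENNReal.ofReal p := ENNReal.one_le_ofReal.2 hp
  calc ENNReal.ofReal δ < ‖∫ x in S, (f - fQ) x ∂P‖ₑ := by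
        rw [Real.enorm_eq_ofReal_abs]
        exact (ENNReal.ofReal_lt_ofReal_iff (hδ0.trans hδS)).2 hδS
    _ = ‖∫ x in S, (P[f | MeasurableSpace.generateFrom (R : Set (Set Ω))] - fQ) x ∂P‖ₑ := by
        rw [setIntegral_condExp_sub hRm (hf.integrable hp') integrable_condExp hSR]
    _ ≤ _ := enorm_setIntegral_le_eLpNorm hp'
        (integrable_condExp.sub integrable_condExp).aestronglyMeasurable S

theorem stmt12 {Ω : Type*} [MeasurableSpace Ω] (P : Measure Ω) [IsProbabilityMeasure P]
    {k : ℕ} (hk : 1 ≤ k) {p : ℝ} (hp : 1 ≤ p) {δ : ℝ} (hδ0 : 0 < δ) (hδ1 : δ ≤ 1)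
    {𝒮 : Set (Set Ω)} (hS : IsSemiring k 𝒮) (hSm : ∀ A ∈ 𝒮, MeasurableSet A)
    (Q : Finset (Set Ω)) (hQS : (Q : Set (Set Ω)) ⊆ 𝒮)
    (hQdisj : (Q : Set (Set Ω)).Pairwise Disjoint) (hQcov : ⋃₀ (Q : Set (Set Ω)) = Set.univ)
    (f : Ω → ℝ) (hf : MemLp f (ENNReal.ofReal p) P)
    (hbig : unifNorm P 𝒮 (f - P[f | MeasurableSpace.generateFrom (Q : Set (Set Ω))]) > δ) :
    ∃ R : Finset (Set Ω), (R : Set (Set Ω)) ⊆ 𝒮 ∧ (R : Set (Set Ω)).Pairwise Disjoint ∧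
      ⋃₀ (R : Set (Set Ω)) = Set.univ ∧ (∀ B ∈ R, ∃ A ∈ Q, B ⊆ A) ∧ R.card ≤ Q.card * (k + 1) ∧
      ENNReal.ofReal δ <
        eLpNorm (P[f | MeasurableSpace.generateFrom (R : Set (Set Ω))]
          - P[f | MeasurableSpace.generateFrom (Q : Set (Set Ω))]) (ENNReal.ofReal p) P :=
  stmt12_general P hp hδ0 hS hSm Q hQS hQdisj hQcov f hf hbig
end

section
/- Let (Ω, Σ, μ) be a measure space and 1 < p ≤ 2. Then for all x, y ∈ L^p(Ω, Σ, μ), ‖x‖²_{L^p} + (p−1) ‖y‖²_{L^p} ≤ (‖x+y‖²_{L^p} + ‖x−y‖²_{L^p}) / 2. -/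
/-!
Write `‖x‖ ^ 2` as the `L^(p/2)` quasi-norm of `|x| ^ 2`. Since `p / 2 ≤ 1`, this quasi-norm is
superadditive on nonnegative functions (reverse Minkowski, a consequence of Hölder), so
`‖x‖² + (p - 1)‖y‖² ≤ ‖x² + (p - 1) y²‖_{p/2}`. Integrating the two-point inequality
`(a² + (p - 1) b²) ^ (p/2) ≤ (|a + b| ^ p + |a - b| ^ p) / 2` bounds the right side by
`((‖x + y‖ ^ p + ‖x - y‖ ^ p) / 2) ^ (2/p)`, and as `2 / p ≥ 1` the power mean inequality bounds
this by `(‖x + y‖² + ‖x - y‖²) / 2`.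

Scaling `b = r a` with `|r| ≤ 1` reduces the two-point inequality to Bernoulli's inequality and
`2 + p (p - 1) r² ≤ (1 + r) ^ p + (1 - r) ^ p`; the difference of the two sides is even and convex
on `[-1, 1]`, its second derivative `p (p - 1) ((1 + r) ^ (p - 2) + (1 - r) ^ (p - 2) - 2)` being
nonnegative by AM-GM.
-/

open Real Set MeasureTheory
open scoped ENNReal

lemma two_le_one_add_rpow_add_one_sub_rpow {s r : ℝ} (hs : s ≤ 0) (hr : |r| < 1) :
    2 ≤ (1 + r) ^ s + (1 - r) ^ s := by
  obtain ⟨hr₁, hr₂⟩ := abs_lt.mp hr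
  have hplus : 0 < 1 + r := by linarith
  have hminus : 0 < 1 - r := by linarith
  have hsq : ∀ t : ℝ, 0 < t → t ^ s = (t ^ (s / 2)) ^ 2 := fun t ht => by
    rw [← rpow_natCast, ← rpow_mul ht.le]; norm_num
  have hprod : 1 ≤ (1 + r) ^ (s / 2) * (1 - r) ^ (s / 2) := by
    rw [← mul_rpow hplus.le hminus.le]
    exact one_le_rpow_of_pos_of_le_one_of_nonpos (by positivity) (by nlinarith [sq_nonneg r])
      (by linarith)
  rw [hsq _ hplus, hsq _ hminus]
  nlinarith [sq_nonneg ((1 + r) ^ (s / 2) - (1 - r) ^ (s / 2))]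

lemma two_add_mul_sq_le_one_add_rpow_add_one_sub_rpow {p r : ℝ} (hp₁ : 1 ≤ p) (hp₂ : p ≤ 2)
    (hr : |r| ≤ 1) : 2 + p * (p - 1) * r ^ 2 ≤ (1 + r) ^ p + (1 - r) ^ p := by
  set φ : ℝ → ℝ := fun t => (1 + t) ^ p + (1 - t) ^ p - p * (p - 1) * t ^ 2 with hφ
  set φ' : ℝ → ℝ := fun t =>
    p * (1 + t) ^ (p - 1) - p * (1 - t) ^ (p - 1) - 2 * p * (p - 1) * t
  set φ'' : ℝ → ℝ := fun t => p * (p - 1) * ((1 + t) ^ (p - 2) + (1 - t) ^ (p - 2) - 2)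
  have hφ' : ∀ t ∈ Ioo (-1 : ℝ) 1, HasDerivAt φ (φ' t) t := fun t ⟨ht₁, ht₂⟩ => by
    have hplus : 0 < 1 + t := by linarith
    have hminus : 0 < 1 - t := by linarith
    have := ((((hasDerivAt_id t).const_add 1).rpow_const (p := p) (Or.inl hplus.ne')).add
      (((hasDerivAt_id t).const_sub 1).rpow_const (p := p) (Or.inl hminus.ne'))).sub
      ((hasDerivAt_pow 2 t).const_mul (p * (p - 1)))
    exact this.congr_deriv (by simp only [φ', id]; push_cast; ring)
  have hφ'' : ∀ t ∈ Ioo (-1 : ℝ) 1, HasDerivAt φ' (φ'' t) t := fun t ⟨ht₁, ht₂⟩ => by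
    have hplus : 0 < 1 + t := by linarith
    have hminus : 0 < 1 - t := by linarith
    have := (((((hasDerivAt_id t).const_add 1).rpow_const (p := p - 1)
      (Or.inl hplus.ne')).const_mul p).sub
      ((((hasDerivAt_id t).const_sub 1).rpow_const (p := p - 1)
      (Or.inl hminus.ne')).const_mul p)).sub ((hasDerivAt_id t).const_mul (2 * p * (p - 1)))
    exact this.congr_deriv (by simp only [φ'', id]; ring_nf)
  have hφ_convex : ConvexOn ℝ (Icc (-1) 1) φ := by
    refine convexOn_of_hasDerivWithinAt2_nonneg (convex_Icc _ _) (f' := φ') (f'' := φ'')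
      (by fun_prop (disch := intros; linarith)) ?_ ?_ ?_ <;> rw [interior_Icc]
    · exact fun t ht => (hφ' t ht).hasDerivWithinAt
    · exact fun t ht => (hφ'' t ht).hasDerivWithinAt
    · intro t ⟨ht₁, ht₂⟩
      have hsum := two_le_one_add_rpow_add_one_sub_rpow (s := p - 2) (by linarith)
        (abs_lt.mpr ⟨ht₁, ht₂⟩)
      have hcoeff : 0 ≤ p * (p - 1) := by nlinarith
      exact mul_nonneg hcoeff (by linarith)
  have hmid := hφ_convex.2 (abs_le.mp hr) (abs_le.mp (abs_neg r ▸ hr))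
    (by norm_num : (0 : ℝ) ≤ 1 / 2) (by norm_num : (0 : ℝ) ≤ 1 / 2) (by norm_num)
  simp only [hφ, smul_eq_mul, ← sub_eq_add_neg, sub_neg_eq_add, even_two, Even.neg_pow] at hmid
  norm_num at hmid
  linarith

lemma rpow_one_add_mul_sq_le {p r : ℝ} (hp₁ : 1 ≤ p) (hp₂ : p ≤ 2) (hr : |r| ≤ 1) :
    (1 + (p - 1) * r ^ 2) ^ (p / 2) ≤ ((1 + r) ^ p + (1 - r) ^ p) / 2 := by
  have hbernoulli := rpow_one_add_le_one_add_mul_self (s := (p - 1) * r ^ 2) (by nlinarith)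
    (p := p / 2) (by linarith) (by linarith)
  have := two_add_mul_sq_le_one_add_rpow_add_one_sub_rpow hp₁ hp₂ hr
  linarith

lemma rpow_sq_add_mul_sq_le_of_abs_le {p a b : ℝ} (hp₁ : 1 ≤ p) (hp₂ : p ≤ 2)
    (hba : |b| ≤ |a|) :
    (a ^ 2 + (p - 1) * b ^ 2) ^ (p / 2) ≤ (|a + b| ^ p + |a - b| ^ p) / 2 := by
  rcases eq_or_ne a 0 with rfl | ha
  · obtain rfl : b = 0 := abs_nonpos_iff.mp (by simpa using hba)
    simp [zero_rpow (by positivity : p / 2 ≠ 0), zero_rpow (by positivity : p ≠ 0)]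
  set r := b / a
  have hr : |r| ≤ 1 := by rwa [abs_div, div_le_one (abs_pos.mpr ha)]
  obtain ⟨hr₁, hr₂⟩ := abs_le.mp hr
  have hb : b = a * r := (mul_div_cancel₀ b ha).symm
  have habs : ∀ s : ℝ, 0 ≤ s → |a * s| ^ p = |a| ^ p * s ^ p := fun s hs => by
    rw [abs_mul, abs_of_nonneg hs, mul_rpow (abs_nonneg a) hs]
  calc (a ^ 2 + (p - 1) * b ^ 2) ^ (p / 2)
      = (|a| ^ 2 * (1 + (p - 1) * r ^ 2)) ^ (p / 2) := by rw [hb, sq_abs]; ring_nf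
    _ = |a| ^ p * (1 + (p - 1) * r ^ 2) ^ (p / 2) := by
        rw [mul_rpow (by positivity) (by nlinarith), ← rpow_natCast, ← rpow_mul (abs_nonneg a)]
        ring_nf
    _ ≤ |a| ^ p * (((1 + r) ^ p + (1 - r) ^ p) / 2) := by
        gcongr; exact rpow_one_add_mul_sq_le hp₁ hp₂ hr
    _ = (|a + b| ^ p + |a - b| ^ p) / 2 := by
        rw [hb, ← mul_one_add, ← mul_one_sub, habs _ (by linarith), habs _ (by linarith)]
        ring

lemma rpow_sq_add_mul_sq_le {p : ℝ} (hp₁ : 1 ≤ p) (hp₂ : p ≤ 2) (a b : ℝ) :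
    (a ^ 2 + (p - 1) * b ^ 2) ^ (p / 2) ≤ (|a + b| ^ p + |a - b| ^ p) / 2 := by
  rcases le_total |b| |a| with hba | hab
  · exact rpow_sq_add_mul_sq_le_of_abs_le hp₁ hp₂ hba
  -- for `|a| ≤ |b|` the roles of `a` and `b` can be swapped, which only increases the left side
  have hsq : a ^ 2 ≤ b ^ 2 := sq_le_sq.mpr hab
  calc (a ^ 2 + (p - 1) * b ^ 2) ^ (p / 2)
      ≤ (b ^ 2 + (p - 1) * a ^ 2) ^ (p / 2) :=
        rpow_le_rpow (by nlinarith [sq_nonneg a, sq_nonneg b]) (by nlinarith) (by positivity)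
    _ ≤ (|b + a| ^ p + |b - a| ^ p) / 2 := rpow_sq_add_mul_sq_le_of_abs_le hp₁ hp₂ hab
    _ = (|a + b| ^ p + |a - b| ^ p) / 2 := by rw [add_comm b, abs_sub_comm]

section ReverseMinkowski

variable {Ω : Type*} [MeasurableSpace Ω] {μ : Measure Ω} {r : ℝ}

-- Hölder with exponents `1 / r` and `1 / (1 - r)`, applied to
-- `w ^ r = (w * S ^ (r - 1)) ^ r * S ^ (r * (1 - r))`.
lemma lintegral_rpow_le_lintegral_mul_rpow_sub_one (hr₀ : 0 < r) (hr₁ : r < 1)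
    {w S : Ω → ℝ≥0∞} (hw : AEMeasurable w μ) (hS : AEMeasurable S μ) (hwS : ∀ ω, w ω ≤ S ω)
    (hS_top : ∀ᵐ ω ∂μ, S ω ≠ ∞) :
    (∫⁻ ω, w ω ^ r ∂μ) ^ (1 / r)
      ≤ (∫⁻ ω, w ω * S ω ^ (r - 1) ∂μ) * (∫⁻ ω, S ω ^ r ∂μ) ^ ((1 - r) / r) := by
  have hconj : (1 / r).HolderConjugate (1 / (1 - r)) := by
    rw [Real.holderConjugate_iff]
    exact ⟨by rw [lt_div_iff₀ hr₀]; linarith, by simp only [one_div, inv_inv]; ring⟩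
  have hfactor : ∀ᵐ ω ∂μ, (w ω * S ω ^ (r - 1)) ^ r * S ω ^ (r * (1 - r)) = w ω ^ r := by
    filter_upwards [hS_top] with ω hω
    rcases eq_or_ne (S ω) 0 with h0 | h0
    · have hw0 : w ω = 0 := le_antisymm (h0 ▸ hwS ω) zero_le
      simp [hw0, h0, ENNReal.zero_rpow_of_pos hr₀,
        ENNReal.zero_rpow_of_pos (by nlinarith : 0 < r * (1 - r))]
    · rw [ENNReal.mul_rpow_of_nonneg _ _ hr₀.le, ← ENNReal.rpow_mul, mul_assoc,
        ← ENNReal.rpow_add _ _ h0 hω, show (r - 1) * r + r * (1 - r) = 0 by ring,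
        ENNReal.rpow_zero, mul_one]
  have hholder := ENNReal.lintegral_mul_le_Lp_mul_Lq μ hconj
    ((hw.mul (hS.pow_const (r - 1))).pow_const r) (hS.pow_const (r * (1 - r)))
  simp only [Pi.mul_apply, ← ENNReal.rpow_mul, one_div_one_div, mul_one_div_cancel hr₀.ne',
    mul_assoc, mul_one_div_cancel (sub_pos.2 hr₁).ne', mul_one, ENNReal.rpow_one] at hholder
  rw [lintegral_congr_ae hfactor] at hholder
  calc (∫⁻ ω, w ω ^ r ∂μ) ^ (1 / r)
      ≤ ((∫⁻ ω, w ω * S ω ^ (r - 1) ∂μ) ^ r * (∫⁻ ω, S ω ^ r ∂μ) ^ (1 - r)) ^ (1 / r) := by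
        gcongr
    _ = _ := by
        rw [ENNReal.mul_rpow_of_nonneg _ _ (by positivity), ← ENNReal.rpow_mul,
          ← ENNReal.rpow_mul, mul_one_div_cancel hr₀.ne', ENNReal.rpow_one, mul_one_div]

lemma add_eLpNorm'_le_eLpNorm'_add_of_le_one (hr₀ : 0 < r) (hr₁ : r ≤ 1) {f g : Ω → ℝ≥0∞}
    (hf : AEMeasurable f μ) (hg : AEMeasurable g μ) :
    eLpNorm' f r μ + eLpNorm' g r μ ≤ eLpNorm' (f + g) r μ := by
  simp only [eLpNorm', enorm_eq_self, Pi.add_apply]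
  rcases hr₁.eq_or_lt with rfl | hr₁
  · simp [lintegral_add_left' hf]
  set S := fun ω => f ω + g ω
  have hS : AEMeasurable S μ := hf.add hg
  set T := ∫⁻ ω, S ω ^ r ∂μ
  rcases eq_or_ne T ∞ with hT | hT
  · rw [hT, ENNReal.top_rpow_of_pos (by positivity)]
    exact le_top
  have hS_top : ∀ᵐ ω ∂μ, S ω ≠ ∞ := by
    filter_upwards [ae_lt_top' (hS.pow_const r) hT] with ω hω
    exact (ENNReal.rpow_eq_top_iff_of_pos hr₀).not.mp hω.ne
  have hsplit : ∫⁻ ω, f ω * S ω ^ (r - 1) ∂μ + ∫⁻ ω, g ω * S ω ^ (r - 1) ∂μ = T := by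
    rw [← lintegral_add_left' (f := fun ω => f ω * S ω ^ (r - 1)) (hf.mul (hS.pow_const _))]
    refine lintegral_congr_ae ?_
    filter_upwards [hS_top] with ω hω
    rw [← add_mul]
    rcases eq_or_ne (S ω) 0 with h0 | h0
    · simp [h0, ENNReal.zero_rpow_of_pos hr₀, S] at h0 ⊢
    · conv_rhs =>
        rw [show r = 1 + (r - 1) by ring, ENNReal.rpow_add _ _ h0 hω, ENNReal.rpow_one]
  calc (∫⁻ ω, f ω ^ r ∂μ) ^ (1 / r) + (∫⁻ ω, g ω ^ r ∂μ) ^ (1 / r)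
      ≤ (∫⁻ ω, f ω * S ω ^ (r - 1) ∂μ) * T ^ ((1 - r) / r)
        + (∫⁻ ω, g ω * S ω ^ (r - 1) ∂μ) * T ^ ((1 - r) / r) :=
        add_le_add
          (lintegral_rpow_le_lintegral_mul_rpow_sub_one hr₀ hr₁ hf hS (fun _ => le_self_add)
            hS_top)
          (lintegral_rpow_le_lintegral_mul_rpow_sub_one hr₀ hr₁ hg hS (fun _ => le_add_self)
            hS_top)
    _ = T ^ (1 + (1 - r) / r) := by
        rw [← add_mul, hsplit, ENNReal.rpow_add_of_nonneg _ _ zero_le_one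
          (div_nonneg (by linarith) hr₀.le), ENNReal.rpow_one]
    _ = T ^ (1 / r) := by congr 1; field_simp; ring

end ReverseMinkowski

lemma eLpNorm'_const_mul {Ω : Type*} [MeasurableSpace Ω] {μ : Measure Ω} {q : ℝ}
    (hq : 0 < q) {c : ℝ≥0∞} (hc : c ≠ ∞) (h : Ω → ℝ≥0∞) :
    eLpNorm' (fun ω => c * h ω) q μ = c * eLpNorm' h q μ := by
  simp only [eLpNorm', enorm_eq_self, ENNReal.mul_rpow_of_nonneg _ _ hq.le]
  rw [lintegral_const_mul' _ _ (ENNReal.rpow_ne_top_of_nonneg hq.le hc),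
    ENNReal.mul_rpow_of_nonneg _ _ (by positivity), ← ENNReal.rpow_mul,
    mul_one_div_cancel hq.ne', ENNReal.rpow_one]

lemma enorm_rpow_two_add_mul_enorm_rpow_two_le {p : ℝ} (hp₁ : 1 ≤ p) (hp₂ : p ≤ 2) (a b : ℝ) :
    (‖a‖ₑ ^ (2 : ℝ) + ENNReal.ofReal (p - 1) * ‖b‖ₑ ^ (2 : ℝ)) ^ (p / 2)
      ≤ 2⁻¹ * ‖a + b‖ₑ ^ p + 2⁻¹ * ‖a - b‖ₑ ^ p := by
  have henorm : ∀ (t : ℝ) {q : ℝ}, 0 ≤ q → ‖t‖ₑ ^ q = ENNReal.ofReal (|t| ^ q) :=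
    fun t q hq => by
      rw [Real.enorm_eq_ofReal_abs, ENNReal.ofReal_rpow_of_nonneg (abs_nonneg t) hq]
  have htwo : (2⁻¹ : ℝ≥0∞) = ENNReal.ofReal 2⁻¹ := by
    rw [ENNReal.ofReal_inv_of_pos two_pos, ENNReal.ofReal_ofNat]
  rw [henorm a zero_le_two, henorm b zero_le_two, henorm (a + b) (by linarith),
    henorm (a - b) (by linarith), htwo, ← ENNReal.ofReal_mul (by linarith),
    ← ENNReal.ofReal_add (by positivity) (by positivity),
    ENNReal.ofReal_rpow_of_nonneg (by positivity) (by positivity),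
    ← ENNReal.ofReal_mul (by norm_num), ← ENNReal.ofReal_mul (by norm_num),
    ← ENNReal.ofReal_add (by positivity) (by positivity)]
  refine ENNReal.ofReal_le_ofReal ?_
  simp only [rpow_two, sq_abs]
  linarith [rpow_sq_add_mul_sq_le hp₁ hp₂ a b]

lemma eLpNorm_sq_add_mul_eLpNorm_sq_le {Ω : Type*} [MeasurableSpace Ω] (μ : Measure Ω) {p : ℝ}
    (hp₁ : 1 ≤ p) (hp₂ : p ≤ 2) {f g : Ω → ℝ} (hf : AEStronglyMeasurable f μ)
    (hg : AEStronglyMeasurable g μ) :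
    eLpNorm f (ENNReal.ofReal p) μ ^ 2
        + ENNReal.ofReal (p - 1) * eLpNorm g (ENNReal.ofReal p) μ ^ 2
      ≤ (eLpNorm (f + g) (ENNReal.ofReal p) μ ^ 2
        + eLpNorm (f - g) (ENNReal.ofReal p) μ ^ 2) / 2 := by
  have hp₀ : 0 < p := by linarith
  have hP : ∀ h : Ω → ℝ, eLpNorm h (ENNReal.ofReal p) μ = eLpNorm' h p μ := fun h => by
    rw [eLpNorm_eq_eLpNorm' (by simpa using hp₀) ENNReal.ofReal_ne_top,
      ENNReal.toReal_ofReal hp₀.le]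
  set P := ENNReal.ofReal p
  set c := ENNReal.ofReal (p - 1)
  have hsq : ∀ h : Ω → ℝ, eLpNorm h P μ ^ 2 = eLpNorm' (‖h ·‖ₑ ^ (2 : ℝ)) (p / 2) μ := fun h => by
    rw [eLpNorm'_enorm_rpow _ _ _ two_pos, div_mul_cancel₀ _ two_ne_zero, hP, ENNReal.rpow_two]
  have hpow : ∀ h : Ω → ℝ, ∫⁻ ω, ‖h ω‖ₑ ^ p ∂μ = eLpNorm h P μ ^ p := fun h => by
    rw [hP, eLpNorm', ← ENNReal.rpow_mul, one_div_mul_cancel hp₀.ne', ENNReal.rpow_one]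
  calc eLpNorm f P μ ^ 2 + c * eLpNorm g P μ ^ 2
      = eLpNorm' (‖f ·‖ₑ ^ (2 : ℝ)) (p / 2) μ
          + eLpNorm' (fun ω => c * ‖g ω‖ₑ ^ (2 : ℝ)) (p / 2) μ := by
        rw [hsq, hsq, eLpNorm'_const_mul (by positivity) ENNReal.ofReal_ne_top]
    _ ≤ eLpNorm' (fun ω => ‖f ω‖ₑ ^ (2 : ℝ) + c * ‖g ω‖ₑ ^ (2 : ℝ)) (p / 2) μ :=
        add_eLpNorm'_le_eLpNorm'_add_of_le_one (by positivity) (by linarith)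
          (hf.enorm.pow_const _) ((hg.enorm.pow_const _).const_mul _)
    _ ≤ (∫⁻ ω, 2⁻¹ * ‖f ω + g ω‖ₑ ^ p + 2⁻¹ * ‖f ω - g ω‖ₑ ^ p ∂μ) ^ (2 / p) := by
        simp only [eLpNorm', enorm_eq_self, one_div_div]
        gcongr with ω
        exact enorm_rpow_two_add_mul_enorm_rpow_two_le hp₁ hp₂ (f ω) (g ω)
    _ = (2⁻¹ * eLpNorm (f + g) P μ ^ p + 2⁻¹ * eLpNorm (f - g) P μ ^ p) ^ (2 / p) := by
        rw [lintegral_add_left' (f := fun ω => 2⁻¹ * ‖f ω + g ω‖ₑ ^ p)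
            (((hf.add hg).enorm.pow_const _).const_mul _),
          lintegral_const_mul' _ _ (by norm_num), lintegral_const_mul' _ _ (by norm_num),
          ← hpow, ← hpow]
        rfl
    _ ≤ 2⁻¹ * (eLpNorm (f + g) P μ ^ p) ^ (2 / p) + 2⁻¹ * (eLpNorm (f - g) P μ ^ p) ^ (2 / p) :=
        ENNReal.rpow_arith_mean_le_arith_mean2_rpow _ _ _ _ ENNReal.inv_two_add_inv_two
          ((one_le_div hp₀).mpr hp₂)
    _ = (eLpNorm (f + g) P μ ^ 2 + eLpNorm (f - g) P μ ^ 2) / 2 := by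
        simp only [← ENNReal.rpow_mul, mul_div_cancel₀ _ hp₀.ne', ENNReal.rpow_two]
        rw [ENNReal.div_eq_inv_mul, mul_add]

theorem stmt14 {Ω : Type*} [MeasurableSpace Ω] (μ : Measure Ω)
    {p : ℝ} (hp1 : 1 < p) (hp2 : p ≤ 2) (x y : Lp ℝ (ENNReal.ofReal p) μ) :
    ‖x‖ ^ 2 + (p - 1) * ‖y‖ ^ 2 ≤ (‖x + y‖ ^ 2 + ‖x - y‖ ^ 2) / 2 := by
  have key := eLpNorm_sq_add_mul_eLpNorm_sq_le μ hp1.le hp2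
    (Lp.aestronglyMeasurable x) (Lp.aestronglyMeasurable y)
  rw [← eLpNorm_congr_ae (Lp.coeFn_add x y), ← eLpNorm_congr_ae (Lp.coeFn_sub x y)] at key
  have hfin : ∀ z : Lp ℝ (ENNReal.ofReal p) μ, eLpNorm z (ENNReal.ofReal p) μ ^ 2 ≠ ∞ :=
    fun z => ENNReal.pow_ne_top (Lp.eLpNorm_ne_top z)
  have := ENNReal.toReal_mono
    (ENNReal.div_ne_top (ENNReal.add_ne_top.mpr ⟨hfin _, hfin _⟩) two_ne_zero) key
  rw [ENNReal.toReal_add (hfin x) (ENNReal.mul_ne_top ENNReal.ofReal_ne_top (hfin y)),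
    ENNReal.toReal_mul, ENNReal.toReal_div, ENNReal.toReal_add (hfin _) (hfin _),
    ENNReal.toReal_ofReal (by linarith), ENNReal.toReal_ofNat] at this
  simpa only [Lp.norm_def, ENNReal.toReal_pow] using this
end

section
/- Let (Ω, F, P) be a probability space, p ≥ 1, (g_i) a martingale in L^p(Ω, F, P) and δ > 0. Then there exist an increasing sequence (F_i) of finite sub-σ-algebras of F and a martingale (f_i) adapted to (F_i) such that ‖g_i − f_i‖_{L^p} ≤ δ for every i ∈ ℕ. -/
/-!
Approximate each `g i` in `L^p`, up to `δ / 2`, by a `B i`-measurable function `s i` with finite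
range: a simple function for `p < ∞`, a rounding of `g i` to a grid for `p = ∞`. The σ-algebras
`F i` generated by `s 0, …, s i` are finite and contained in `B i`, so `f i := E[g i | F i]` is an
`F`-martingale by the tower property. Since `E[· | F i]` is an `L^p` contraction fixing `s i`,
`‖g i - f i‖_p ≤ ‖g i - s i‖_p + ‖E[s i - g i | F i]‖_p ≤ 2 ‖g i - s i‖_p ≤ δ`.
-/

open MeasureTheory Set
open scoped ENNReal

theorem Real.exists_measurable_finite_range_abs_sub_lt (C : ℝ) {ε : ℝ} (hε : 0 < ε) :
    ∃ φ : ℝ → ℝ, Measurable φ ∧ (range φ).Finite ∧ ∀ x, |x| ≤ C → |x - φ x| < ε := by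
  let grid : ℤ → ℝ := fun k => ε * k
  refine ⟨fun x => if |x| ≤ C then grid ⌊x / ε⌋ else 0,
    Measurable.ite (measurableSet_le (by fun_prop) (by fun_prop)) (by measurability) (by fun_prop),
    ?_, fun x hx => ?_⟩
  · refine (((finite_Icc ⌊-C / ε⌋ ⌊C / ε⌋).image grid).insert 0).subset ?_
    rintro _ ⟨x, rfl⟩
    dsimp only
    split_ifs with hx
    · refine mem_insert_of_mem _ ⟨_, ⟨?_, ?_⟩, rfl⟩ <;> gcongr
      exacts [(abs_le.1 hx).1, (abs_le.1 hx).2]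
    · exact mem_insert 0 _
  · have hfract : x - grid ⌊x / ε⌋ = ε * Int.fract (x / ε) := by
      simp only [grid, Int.fract]
      field_simp
    dsimp only
    rw [if_pos hx, hfract, abs_of_nonneg (mul_nonneg hε.le (Int.fract_nonneg _))]
    exact mul_lt_of_lt_one_right hε (Int.fract_lt_one _)

theorem MeasurableSpace.finite_measurableSet_comap_of_finite_range {Ω β : Type*}
    [mβ : MeasurableSpace β] {t : Ω → β} (ht : (range t).Finite) :
    {A : Set Ω | MeasurableSet[mβ.comap t] A}.Finite := by
  refine (ht.finite_subsets.image (t ⁻¹' ·)).subset ?_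
  rintro _ ⟨A, -, rfl⟩
  exact ⟨A ∩ range t, inter_subset_right, preimage_inter_range⟩

namespace MeasureTheory

theorem MemLp.exists_finite_range_eLpNorm_top_sub_le {Ω : Type*}
    {m mΩ : MeasurableSpace Ω} {μ : Measure Ω} {g : Ω → ℝ} (hgm : StronglyMeasurable[m] g)
    (hg : MemLp g ∞ μ) {ε : ℝ} (hε : 0 < ε) :
    ∃ s : Ω → ℝ, StronglyMeasurable[m] s ∧ (range s).Finite ∧
      eLpNorm (g - s) ∞ μ ≤ ENNReal.ofReal ε := by
  obtain ⟨φ, hφm, hφr, hφ⟩ :=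
    Real.exists_measurable_finite_range_abs_sub_lt (eLpNorm g ∞ μ).toReal hε
  refine ⟨φ ∘ g, (hφm.comp hgm.measurable).stronglyMeasurable,
    hφr.subset (range_comp_subset_range g φ), ?_⟩
  have hbound : ∀ᵐ ω ∂μ, |g ω| ≤ (eLpNorm g ∞ μ).toReal := by
    have htop : eLpNormEssSup g μ ≠ ∞ := eLpNorm_exponent_top (f := g) ▸ hg.eLpNorm_ne_top
    filter_upwards [enorm_ae_le_eLpNormEssSup g μ] with ω hω
    rw [← Real.norm_eq_abs, ← toReal_enorm (g ω), eLpNorm_exponent_top]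
    exact ENNReal.toReal_mono htop hω
  rw [eLpNorm_exponent_top]
  exact eLpNormEssSup_le_of_ae_bound (hbound.mono fun ω hω => (hφ _ hω).le)

theorem MemLp.exists_finite_range_eLpNorm_sub_le {Ω : Type*}
    {m mΩ : MeasurableSpace Ω} (hm : m ≤ mΩ) {μ : Measure Ω} {p : ℝ≥0∞} {g : Ω → ℝ}
    (hgm : StronglyMeasurable[m] g) (hg : MemLp g p μ) {ε : ℝ} (hε : 0 < ε) :
    ∃ s : Ω → ℝ, StronglyMeasurable[m] s ∧ (range s).Finite ∧
      eLpNorm (g - s) p μ ≤ ENNReal.ofReal ε := by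
  rcases eq_or_ne p ∞ with rfl | hp
  · exact hg.exists_finite_range_eLpNorm_top_sub_le hgm hε
  have hg_trim : MemLp g p (μ.trim hm) :=
    ⟨hgm.aestronglyMeasurable, (eLpNorm_trim hm hgm).trans_lt hg.eLpNorm_lt_top⟩
  obtain ⟨s, hs, -⟩ := @MemLp.exists_simpleFunc_eLpNorm_sub_lt Ω m p ℝ _ g (μ.trim hm) hg_trim
    hp (ENNReal.ofReal ε) (ENNReal.ofReal_pos.2 hε).ne'
  have hsm : StronglyMeasurable[m] s := @SimpleFunc.stronglyMeasurable Ω ℝ m _ s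
  refine ⟨s, hsm, @SimpleFunc.finite_range Ω ℝ m s, ?_⟩
  rw [← eLpNorm_trim hm (hgm.sub hsm)]
  exact hs.le

theorem eLpNorm_sub_condExp_le_two_mul {Ω : Type*} {m mΩ : MeasurableSpace Ω}
    (hm : m ≤ mΩ) {μ : Measure Ω} [SigmaFinite (μ.trim hm)] {p : ℝ≥0∞} (hp : 1 ≤ p)
    {g s : Ω → ℝ} (hg : Integrable g μ) (hs : StronglyMeasurable[m] s) (hsi : Integrable s μ) :
    eLpNorm (g - μ[g | m]) p μ ≤ 2 * eLpNorm (g - s) p μ := by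
  have hcond : s - μ[g | m] =ᵐ[μ] μ[s - g | m] := by
    have h := condExp_sub hsi hg m
    rw [condExp_of_stronglyMeasurable hm hs hsi] at h
    exact h.symm
  calc eLpNorm (g - μ[g | m]) p μ
      = eLpNorm ((g - s) + (s - μ[g | m])) p μ := by rw [sub_add_sub_cancel]
    _ ≤ eLpNorm (g - s) p μ + eLpNorm (s - μ[g | m]) p μ :=
        eLpNorm_add_le (hg.1.sub hsi.1) (hsi.1.sub integrable_condExp.1) hp
    _ ≤ eLpNorm (g - s) p μ + eLpNorm (g - s) p μ := by
        rw [eLpNorm_congr_ae hcond, ← eLpNorm_sub_comm]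
        gcongr
        exact eLpNorm_condExp_le_eLpNorm _ hp
    _ = 2 * eLpNorm (g - s) p μ := (two_mul _).symm

theorem Martingale.condExp_of_le_filtration {Ω ι : Type*} {mΩ : MeasurableSpace Ω}
    [Preorder ι] {P : Measure Ω} [IsFiniteMeasure P] {ℱ 𝒢 : Filtration ι mΩ} {g : ι → Ω → ℝ}
    (hg : Martingale g ℱ P) (h𝒢ℱ : ∀ i, 𝒢 i ≤ ℱ i) :
    Martingale (fun i => P[g i | 𝒢 i]) 𝒢 P := by
  refine ⟨fun i => stronglyMeasurable_condExp, fun i j hij => ?_⟩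
  calc P[P[g j | 𝒢 j] | 𝒢 i]
      =ᵐ[P] P[g j | 𝒢 i] := condExp_condExp_of_le (𝒢.mono hij) (𝒢.le j)
    _ =ᵐ[P] P[P[g j | ℱ i] | 𝒢 i] := (condExp_condExp_of_le (h𝒢ℱ i) (ℱ.le i)).symm
    _ =ᵐ[P] P[g i | 𝒢 i] := condExp_congr_ae (hg.condExp_ae_eq hij)

namespace Filtration

variable {Ω ι β : Type*} {mΩ : MeasurableSpace Ω} [Preorder ι]
  [TopologicalSpace β] [TopologicalSpace.MetrizableSpace β] [MeasurableSpace β] [BorelSpace β]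
  {u : ι → Ω → β}

theorem finite_measurableSet_natural [LocallyFiniteOrderBot ι]
    (hum : ∀ i, StronglyMeasurable (u i)) (hu : ∀ i, (range (u i)).Finite) (i : ι) :
    {A : Set Ω | MeasurableSet[natural u hum i] A}.Finite := by
  rw [natural_eq_comap]
  refine MeasurableSpace.finite_measurableSet_comap_of_finite_range
    ((Finite.pi fun j : Iic i => hu j).subset ?_)
  rintro _ ⟨ω, rfl⟩
  exact fun j _ => ⟨ω, rfl⟩

theorem natural_le_of_stronglyAdapted {ℱ : Filtration ι mΩ} (hu : StronglyAdapted ℱ u)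
    (hum : ∀ i, StronglyMeasurable (u i)) (i : ι) : natural u hum i ≤ ℱ i :=
  iSup₂_le fun j hj => (measurable_iff_comap_le.1 (hu j).measurable).trans (ℱ.mono hj)

end Filtration

end MeasureTheory

theorem stmt18 {Ω : Type*} {mΩ : MeasurableSpace Ω} (P : Measure Ω) [IsProbabilityMeasure P]
    {p : ℝ≥0∞} (hp : 1 ≤ p) (g : ℕ → Ω → ℝ) (B : Filtration ℕ mΩ)
    (hg : Martingale g B P) (hgp : ∀ i, MemLp (g i) p P) {δ : ℝ} (hδ : 0 < δ) :
    ∃ F : Filtration ℕ mΩ, (∀ i, {s : Set Ω | MeasurableSet[F i] s}.Finite) ∧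
      ∃ f : ℕ → Ω → ℝ, Martingale f F P ∧
        ∀ i, eLpNorm (g i - f i) p P ≤ ENNReal.ofReal δ := by
  choose s hsB hs_fin hs_approx using fun i =>
    (hgp i).exists_finite_range_eLpNorm_sub_le (B.le i) (hg.stronglyAdapted i) (half_pos hδ)
  have hsm : ∀ i, StronglyMeasurable (s i) := fun i => (hsB i).mono (B.le i)
  have hs_int : ∀ i, Integrable (s i) P := fun i => by
    have hsub : MemLp (g i - s i) p P :=
      ⟨(hgp i).1.sub (hsm i).aestronglyMeasurable, (hs_approx i).trans_lt ENNReal.ofReal_lt_top⟩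
    simpa using ((hgp i).sub hsub).integrable hp
  let F := Filtration.natural s hsm
  refine ⟨F, Filtration.finite_measurableSet_natural hsm hs_fin, fun i => P[g i | F i],
    hg.condExp_of_le_filtration (Filtration.natural_le_of_stronglyAdapted hsB hsm), fun i => ?_⟩
  calc eLpNorm (g i - P[g i | F i]) p P
      ≤ 2 * eLpNorm (g i - s i) p P :=
        eLpNorm_sub_condExp_le_two_mul (F.le i) hp ((hgp i).integrable hp)
          (Filtration.stronglyAdapted_natural hsm i) (hs_int i)
    _ ≤ 2 * ENNReal.ofReal (δ / 2) := by gcongr; exact hs_approx i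
    _ = ENNReal.ofReal δ := by
        rw [← ENNReal.ofReal_ofNat 2, ← ENNReal.ofReal_mul zero_le_two,
          mul_div_cancel₀ _ two_ne_zero]
end
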